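/- arXiv:1703.08904 — 10 statements merged into one kernel-verified Lean document; each statement's English description precedes it below -/
import Mathlib

section
/- Let g,h : ℝ² → ℝ be smooth and define f = (f₁,f₂,f₃) : ℝ² → ℝ³ by f(u,v) = (u, (v²/2 − u)·g_vv(u,v) − v·g_v(u,v) + g(u,v), (v²/2 − u)·h_vv(u,v) − v·h_v(u,v) + h(u,v)). Then f_v(u,v) = (0, (v²/2 − u)·g_vvv(u,v), (v²/2 − u)·h_vvv(u,v)) for all (u,v). Moreover, if (g_vvv(0,0), h_vvv(0,0)) ≠ (0,0), then there is a neighborhood U of the origin such that for all (u,v) ∈ U the differential of f at (u,v) fails to be injective if and only if u = v²/2, and at each such point the kernel of the differential is spanned by the vector (0,1). -/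
noncomputable def Dv (F : ℝ × ℝ → ℝ) : ℝ × ℝ → ℝ := fun p => fderiv ℝ F p (0, 1)

lemma Dv_contDiff {F : ℝ × ℝ → ℝ} (hF : ContDiff ℝ (⊤ : ℕ∞) F) : ContDiff ℝ (⊤ : ℕ∞) (Dv F) :=
  (hF.fderiv_right (by simp)).clm_apply contDiff_const

lemma hasDerivAt_slice {E : Type*} [NormedAddCommGroup E] [NormedSpace ℝ E]
    {F : ℝ × ℝ → E} (u v : ℝ) (hF : DifferentiableAt ℝ F (u, v)) :
    HasDerivAt (fun w => F (u, w)) (fderiv ℝ F (u, v) (0, 1)) v :=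
  hF.hasFDerivAt.comp_hasDerivAt v ((hasDerivAt_const v u).prodMk (hasDerivAt_id v))

lemma Dv_hasDerivAt {F : ℝ × ℝ → ℝ} (hF : ContDiff ℝ (⊤ : ℕ∞) F) (u v : ℝ) :
    HasDerivAt (fun w => F (u, w)) (Dv F (u, v)) v :=
  hasDerivAt_slice u v (hF.differentiable (by simp) (u, v))

lemma Dv_slice_deriv {F : ℝ × ℝ → ℝ} (hF : ContDiff ℝ (⊤ : ℕ∞) F) (u : ℝ) :
    deriv (fun w => F (u, w)) = fun v => Dv F (u, v) :=
  funext fun v => (Dv_hasDerivAt hF u v).deriv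

lemma compDeriv {F : ℝ × ℝ → ℝ} (hF : ContDiff ℝ (⊤ : ℕ∞) F) (u v : ℝ) :
    HasDerivAt (fun w => (w ^ 2 / 2 - u) * Dv (Dv F) (u, w) - w * Dv F (u, w) + F (u, w))
      ((v ^ 2 / 2 - u) * Dv (Dv (Dv F)) (u, v)) v := by
  have h0 := Dv_hasDerivAt hF u v
  have h1 := Dv_hasDerivAt (Dv_contDiff hF) u v
  have h2 := Dv_hasDerivAt (Dv_contDiff (Dv_contDiff hF)) u v
  have hc : HasDerivAt (fun w : ℝ => w ^ 2 / 2 - u) ((2 * v ^ 1) / 2) v :=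
    ((hasDerivAt_pow 2 v).div_const 2).sub_const u
  have : HasDerivAt (fun w => (w ^ 2 / 2 - u) * Dv (Dv F) (u, w) - w * Dv F (u, w) + F (u, w)) _ v :=
    ((hc.mul h2).sub ((hasDerivAt_id v).mul h1)).add h0
  convert this using 1
  simp only [id_eq]
  ring

/-- For the normal form `f` of a singular point of the second kind:
the `v`-partial derivative of `f` is `(0, (v²/2−u)g_vvv, (v²/2−u)h_vvv)`,
and under the nondegeneracy condition `(g_vvv(0,0), h_vvv(0,0)) ≠ (0,0)`,
near the origin the differential of `f` fails to be injective exactly on the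
parabola `u = v²/2`, where its kernel is spanned by `(0,1)`. -/
theorem stmt_2 (g h : ℝ → ℝ → ℝ)
    (hg : ContDiff ℝ (⊤ : ℕ∞) (fun p : ℝ × ℝ => g p.1 p.2))
    (hh : ContDiff ℝ (⊤ : ℕ∞) (fun p : ℝ × ℝ => h p.1 p.2))
    (f : ℝ × ℝ → ℝ × ℝ × ℝ)
    (hf : ∀ u v : ℝ, f (u, v) =
      (u, (v ^ 2 / 2 - u) * deriv (deriv (g u)) v - v * deriv (g u) v + g u v,
          (v ^ 2 / 2 - u) * deriv (deriv (h u)) v - v * deriv (h u) v + h u v)) :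
    (∀ u v : ℝ, deriv (fun w => f (u, w)) v =
      (0, (v ^ 2 / 2 - u) * deriv (deriv (deriv (g u))) v,
          (v ^ 2 / 2 - u) * deriv (deriv (deriv (h u))) v))
    ∧ ((deriv (deriv (deriv (g 0))) 0, deriv (deriv (deriv (h 0))) 0) ≠ (0, 0) →
        ∃ U ∈ nhds ((0 : ℝ), (0 : ℝ)), ∀ p ∈ U,
          (¬ Function.Injective (fderiv ℝ f p) ↔ p.1 = p.2 ^ 2 / 2)
          ∧ (p.1 = p.2 ^ 2 / 2 →
              LinearMap.ker (fderiv ℝ f p : ℝ × ℝ →ₗ[ℝ] ℝ × ℝ × ℝ)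
                = Submodule.span ℝ {((0 : ℝ), (1 : ℝ))})) := by
  set G : ℝ × ℝ → ℝ := fun p => g p.1 p.2 with hGdef
  set H : ℝ × ℝ → ℝ := fun p => h p.1 p.2 with hHdef
  have e1g : ∀ u : ℝ, deriv (g u) = fun v => Dv G (u, v) := fun u => by
    have : g u = fun w => G (u, w) := rfl
    rw [this, Dv_slice_deriv hg u]
  have e2g : ∀ u : ℝ, deriv (deriv (g u)) = fun v => Dv (Dv G) (u, v) := fun u => by
    rw [e1g u, Dv_slice_deriv (Dv_contDiff hg) u]
  have e3g : ∀ u : ℝ, deriv (deriv (deriv (g u))) = fun v => Dv (Dv (Dv G)) (u, v) := fun u => by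
    rw [e2g u, Dv_slice_deriv (Dv_contDiff (Dv_contDiff hg)) u]
  have e1h : ∀ u : ℝ, deriv (h u) = fun v => Dv H (u, v) := fun u => by
    have : h u = fun w => H (u, w) := rfl
    rw [this, Dv_slice_deriv hh u]
  have e2h : ∀ u : ℝ, deriv (deriv (h u)) = fun v => Dv (Dv H) (u, v) := fun u => by
    rw [e1h u, Dv_slice_deriv (Dv_contDiff hh) u]
  have e3h : ∀ u : ℝ, deriv (deriv (deriv (h u))) = fun v => Dv (Dv (Dv H)) (u, v) := fun u => by
    rw [e2h u, Dv_slice_deriv (Dv_contDiff (Dv_contDiff hh)) u]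
  -- rewrite f
  have hfe : ∀ u v : ℝ, f (u, v) =
      (u, (v ^ 2 / 2 - u) * Dv (Dv G) (u, v) - v * Dv G (u, v) + G (u, v),
          (v ^ 2 / 2 - u) * Dv (Dv H) (u, v) - v * Dv H (u, v) + H (u, v)) := by
    intro u v
    rw [hf u v, e2g u, e1g u, e2h u, e1h u]
  -- part 1 with Dv notation
  have hD : ∀ u v : ℝ, HasDerivAt (fun w => f (u, w))
      ((0 : ℝ), (v ^ 2 / 2 - u) * Dv (Dv (Dv G)) (u, v),
        (v ^ 2 / 2 - u) * Dv (Dv (Dv H)) (u, v)) v := by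
    intro u v
    have hfun : (fun w => f (u, w)) = fun w =>
        ((u : ℝ), (w ^ 2 / 2 - u) * Dv (Dv G) (u, w) - w * Dv G (u, w) + G (u, w),
          (w ^ 2 / 2 - u) * Dv (Dv H) (u, w) - w * Dv H (u, w) + H (u, w)) :=
      funext fun w => hfe u w
    rw [hfun]
    exact (hasDerivAt_const v u).prodMk ((compDeriv hg u v).prodMk (compDeriv hh u v))
  have part1 : ∀ u v : ℝ, deriv (fun w => f (u, w)) v =
      (0, (v ^ 2 / 2 - u) * deriv (deriv (deriv (g u))) v,
          (v ^ 2 / 2 - u) * deriv (deriv (deriv (h u))) v) := by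
    intro u v
    rw [e3g u, e3h u]
    exact (hD u v).deriv
  refine ⟨part1, fun hne => ?_⟩
  -- f is smooth
  set F : ℝ × ℝ → ℝ × ℝ × ℝ := fun p =>
    (p.1, (p.2 ^ 2 / 2 - p.1) * Dv (Dv G) p - p.2 * Dv G p + G p,
        (p.2 ^ 2 / 2 - p.1) * Dv (Dv H) p - p.2 * Dv H p + H p) with hFdef
  have hfF : f = F := by
    funext p
    obtain ⟨u, v⟩ := p
    exact hfe u v
  have hFc : ContDiff ℝ (⊤ : ℕ∞) F := by
    refine contDiff_fst.prodMk (ContDiff.prodMk ?_ ?_) <;>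
    · refine ContDiff.add (ContDiff.sub (ContDiff.mul ?_ ?_) (contDiff_snd.mul ?_)) ?_
      · exact ((contDiff_snd.pow 2).div_const 2).sub contDiff_fst
      all_goals first
        | exact Dv_contDiff (Dv_contDiff hg) | exact Dv_contDiff hg | exact hg
        | exact Dv_contDiff (Dv_contDiff hh) | exact Dv_contDiff hh | exact hh
  have hfd : Differentiable ℝ f := by rw [hfF]; exact hFc.differentiable (by simp)
  -- first component of the differential
  have hfst : ∀ (p : ℝ × ℝ) (x : ℝ × ℝ), (fderiv ℝ f p x).1 = x.1 := by
    intro p x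
    have h1 : (fun q : ℝ × ℝ => (f q).1) = fun q : ℝ × ℝ => q.1 := by rw [hfF]
    have h2 : HasFDerivAt (fun q : ℝ × ℝ => (f q).1)
        (ContinuousLinearMap.fst ℝ ℝ ℝ) p := by rw [h1]; exact hasFDerivAt_fst
    have h3 : HasFDerivAt (fun q : ℝ × ℝ => (f q).1)
        ((ContinuousLinearMap.fst ℝ ℝ (ℝ × ℝ)).comp (fderiv ℝ f p)) p :=
      (hfd p).hasFDerivAt.fst
    have h4 := h3.unique h2
    have := congrFun (congrArg DFunLike.coe h4) x
    simpa using this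
  -- value of the differential on (0,1)
  have hv : ∀ p : ℝ × ℝ, fderiv ℝ f p (0, 1) =
      ((0 : ℝ), (p.2 ^ 2 / 2 - p.1) * Dv (Dv (Dv G)) p,
        (p.2 ^ 2 / 2 - p.1) * Dv (Dv (Dv H)) p) := by
    intro p
    obtain ⟨u, v⟩ := p
    have hs := hasDerivAt_slice u v (hfd (u, v))
    exact hs.unique (hD u v)
  -- the neighborhood
  set U : Set (ℝ × ℝ) :=
    {p | (Dv (Dv (Dv G)) p, Dv (Dv (Dv H)) p) ≠ ((0 : ℝ), (0 : ℝ))} with hUdef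
  have hUopen : IsOpen U := by
    have hcont : Continuous fun p : ℝ × ℝ => (Dv (Dv (Dv G)) p, Dv (Dv (Dv H)) p) :=
      ((Dv_contDiff (Dv_contDiff (Dv_contDiff hg))).continuous).prodMk
        ((Dv_contDiff (Dv_contDiff (Dv_contDiff hh))).continuous)
    exact isOpen_compl_singleton.preimage hcont
  have hU0 : ((0 : ℝ), (0 : ℝ)) ∈ U := by
    have hg0 : deriv (deriv (deriv (g 0))) 0 = Dv (Dv (Dv G)) (0, 0) := by rw [e3g 0]
    have hh0 : deriv (deriv (deriv (h 0))) 0 = Dv (Dv (Dv H)) (0, 0) := by rw [e3h 0]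
    simpa [hUdef, hg0, hh0] using hne
  refine ⟨U, hUopen.mem_nhds hU0, fun p hp => ?_⟩
  have hvp := hv p
  constructor
  · constructor
    · intro hni
      by_contra hpar
      apply hni
      rw [injective_iff_map_eq_zero]
      intro x hx
      have hx1 : x.1 = 0 := by
        have := hfst p x
        rw [hx] at this
        exact this.symm
      have hxs : x = x.2 • ((0 : ℝ), (1 : ℝ)) := by
        ext
        · simpa using hx1
        · simp
      rw [hxs, map_smul, hvp] at hx
      have hc : p.2 ^ 2 / 2 - p.1 ≠ 0 := by
        intro hc0
        exact hpar (by linarith [sub_eq_zero.mp hc0])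
      by_cases hx2 : x.2 = 0
      · rw [hxs, hx2, zero_smul]
      · exfalso
        have h2 : x.2 * ((p.2 ^ 2 / 2 - p.1) * Dv (Dv (Dv G)) p) = 0 := congrArg (fun q : ℝ × ℝ × ℝ => q.2.1) hx
        have h3 : x.2 * ((p.2 ^ 2 / 2 - p.1) * Dv (Dv (Dv H)) p) = 0 := congrArg (fun q : ℝ × ℝ × ℝ => q.2.2) hx
        have hG3 : Dv (Dv (Dv G)) p = 0 := by
          rcases mul_eq_zero.mp h2 with h | h
          · exact absurd h hx2
          · rcases mul_eq_zero.mp h with h' | h'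
            · exact absurd h' hc
            · exact h'
        have hH3 : Dv (Dv (Dv H)) p = 0 := by
          rcases mul_eq_zero.mp h3 with h | h
          · exact absurd h hx2
          · rcases mul_eq_zero.mp h with h' | h'
            · exact absurd h' hc
            · exact h'
        exact hp (by rw [hG3, hH3])
    · intro hpar hinj
      have h01 : fderiv ℝ f p ((0 : ℝ), (1 : ℝ)) = 0 := by
        rw [hvp, hpar]
        norm_num [Prod.ext_iff]
      have := hinj (h01.trans (map_zero (fderiv ℝ f p)).symm)
      simp [Prod.ext_iff] at this
  · intro hpar
    have h01 : fderiv ℝ f p ((0 : ℝ), (1 : ℝ)) = 0 := by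
      rw [hvp, hpar]
      norm_num [Prod.ext_iff]
    ext x
    simp only [LinearMap.mem_ker, Submodule.mem_span_singleton]
    constructor
    · intro hx
      have hx1 : x.1 = 0 := by
        have := hfst p x
        rw [ContinuousLinearMap.coe_coe] at hx
        rw [hx] at this
        exact this.symm
      exact ⟨x.2, by ext <;> simp [hx1]⟩
    · rintro ⟨a, rfl⟩
      rw [map_smul, ContinuousLinearMap.coe_coe, h01, smul_zero]
end

section
/- Let g,h : ℝ² → ℝ be smooth and define f = (f₁,f₂,f₃) : ℝ² → ℝ³ by f(u,v) = (u, (v²/2 − u)·g_vv(u,v) − v·g_v(u,v) + g(u,v), (v²/2 − u)·h_vv(u,v) − v·h_v(u,v) + h(u,v)), and define ν₂ : ℝ² → ℝ³ by ν₂(u,v) = (h_vvv(u,v)·(f₂)_u(u,v) − g_vvv(u,v)·(f₃)_u(u,v), −h_vvv(u,v), g_vvv(u,v)). Then ⟨ν₂(u,v), f_u(u,v)⟩ = 0 and ⟨ν₂(u,v), f_v(u,v)⟩ = 0 for all (u,v) ∈ ℝ². Moreover, if (g_vvv(0,0), h_vvv(0,0)) ≠ (0,0), then ν₂(0,0) ≠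 0. -/
/-- Euclidean inner product on `ℝ × ℝ × ℝ`. -/
def dot3 (a b : ℝ × ℝ × ℝ) : ℝ := a.1 * b.1 + a.2.1 * b.2.1 + a.2.2 * b.2.2

private lemma pd2_hasDerivAt {F : ℝ × ℝ → ℝ} (hF : ContDiff ℝ (⊤ : ℕ∞) F) (u v : ℝ) :
    HasDerivAt (fun w => F (u, w)) (fderiv ℝ F (u, v) (0, 1)) v :=
  (hF.differentiable (by simp) (u, v)).hasFDerivAt.comp_hasDerivAt v
    ((hasDerivAt_const v u).prodMk (hasDerivAt_id v))

private lemma pd1_hasDerivAt {F : ℝ × ℝ → ℝ} (hF : ContDiff ℝ (⊤ : ℕ∞) F) (u v : ℝ) :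
    HasDerivAt (fun t => F (t, v)) (fderiv ℝ F (u, v) (1, 0)) u :=
  (hF.differentiable (by simp) (u, v)).hasFDerivAt.comp_hasDerivAt u
    ((hasDerivAt_id u).prodMk (hasDerivAt_const u v))

private lemma pd2_contDiff {F : ℝ × ℝ → ℝ} (hF : ContDiff ℝ (⊤ : ℕ∞) F) :
    ContDiff ℝ (⊤ : ℕ∞) (fun p : ℝ × ℝ => fderiv ℝ F p (0, 1)) :=
  (hF.fderiv_right (by simp)).clm_apply contDiff_const

private lemma aux_chain {g : ℝ → ℝ → ℝ} (hg : ContDiff ℝ (⊤ : ℕ∞) (fun p : ℝ × ℝ => g p.1 p.2)) :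
    ∃ g1 g2 g3 : ℝ × ℝ → ℝ,
      ContDiff ℝ (⊤ : ℕ∞) g1 ∧ ContDiff ℝ (⊤ : ℕ∞) g2 ∧ ContDiff ℝ (⊤ : ℕ∞) g3 ∧
      (∀ u v : ℝ, HasDerivAt (g u) (g1 (u, v)) v) ∧
      (∀ u v : ℝ, HasDerivAt (fun w => g1 (u, w)) (g2 (u, v)) v) ∧
      (∀ u v : ℝ, HasDerivAt (fun w => g2 (u, w)) (g3 (u, v)) v) := by
  refine ⟨_, _, _, pd2_contDiff hg, pd2_contDiff (pd2_contDiff hg),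
    pd2_contDiff (pd2_contDiff (pd2_contDiff hg)), ?_, ?_, ?_⟩
  · exact fun u v => pd2_hasDerivAt hg u v
  · exact fun u v => pd2_hasDerivAt (pd2_contDiff hg) u v
  · exact fun u v => pd2_hasDerivAt (pd2_contDiff (pd2_contDiff hg)) u v

/-- For the normal form `f` of a singular point of the second kind, the vector
field `ν₂ = (h_vvv·(f₂)_u − g_vvv·(f₃)_u, −h_vvv, g_vvv)` is orthogonal to
`f_u` and `f_v`, and it is nonzero at the origin provided
`(g_vvv(0,0), h_vvv(0,0)) ≠ (0,0)`. -/
theorem stmt_3 (g h : ℝ → ℝ → ℝ)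
    (hg : ContDiff ℝ (⊤ : ℕ∞) (fun p : ℝ × ℝ => g p.1 p.2))
    (hh : ContDiff ℝ (⊤ : ℕ∞) (fun p : ℝ × ℝ => h p.1 p.2))
    (f2 f3 : ℝ → ℝ → ℝ)
    (hf2 : ∀ u v : ℝ, f2 u v =
      (v ^ 2 / 2 - u) * deriv (deriv (g u)) v - v * deriv (g u) v + g u v)
    (hf3 : ∀ u v : ℝ, f3 u v =
      (v ^ 2 / 2 - u) * deriv (deriv (h u)) v - v * deriv (h u) v + h u v)
    (f : ℝ → ℝ → ℝ × ℝ × ℝ)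
    (hf : ∀ u v : ℝ, f u v = (u, f2 u v, f3 u v))
    (ν₂ : ℝ → ℝ → ℝ × ℝ × ℝ)
    (hν : ∀ u v : ℝ, ν₂ u v =
      (deriv (deriv (deriv (h u))) v * deriv (fun t => f2 t v) u
          - deriv (deriv (deriv (g u))) v * deriv (fun t => f3 t v) u,
        -(deriv (deriv (deriv (h u))) v), deriv (deriv (deriv (g u))) v)) :
    (∀ u v : ℝ,
        dot3 (ν₂ u v) (deriv (fun t => f t v) u) = 0
          ∧ dot3 (ν₂ u v) (deriv (fun w => f u w) v) = 0)
    ∧ ((deriv (deriv (deriv (g 0))) 0, deriv (deriv (deriv (h 0))) 0) ≠ (0, 0) →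
        ν₂ 0 0 ≠ 0) := by
  obtain ⟨g1, g2, g3, hg1c, hg2c, hg3c, hg1d, hg2d, hg3d⟩ := aux_chain hg
  obtain ⟨h1, h2, h3, hh1c, hh2c, hh3c, hh1d, hh2d, hh3d⟩ := aux_chain hh
  -- pointwise identities for the iterated derivatives
  have Eg1 : ∀ u : ℝ, deriv (g u) = fun w => g1 (u, w) :=
    fun u => funext fun w => (hg1d u w).deriv
  have Eg2 : ∀ u : ℝ, deriv (deriv (g u)) = fun w => g2 (u, w) := by
    intro u; rw [Eg1 u]; exact funext fun w => (hg2d u w).deriv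
  have Eg3 : ∀ u v : ℝ, deriv (deriv (deriv (g u))) v = g3 (u, v) := by
    intro u v; rw [Eg2 u]; exact (hg3d u v).deriv
  have Eh1 : ∀ u : ℝ, deriv (h u) = fun w => h1 (u, w) :=
    fun u => funext fun w => (hh1d u w).deriv
  have Eh2 : ∀ u : ℝ, deriv (deriv (h u)) = fun w => h2 (u, w) := by
    intro u; rw [Eh1 u]; exact funext fun w => (hh2d u w).deriv
  have Eh3 : ∀ u v : ℝ, deriv (deriv (deriv (h u))) v = h3 (u, v) := by
    intro u v; rw [Eh2 u]; exact (hh3d u v).deriv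
  have ef2 : ∀ u v : ℝ, f2 u v = (v ^ 2 / 2 - u) * g2 (u, v) - v * g1 (u, v) + g u v := by
    intro u v; rw [hf2 u v, Eg2 u, Eg1 u]
  have ef3 : ∀ u v : ℝ, f3 u v = (v ^ 2 / 2 - u) * h2 (u, v) - v * h1 (u, v) + h u v := by
    intro u v; rw [hf3 u v, Eh2 u, Eh1 u]
  constructor
  · intro u v
    -- u-direction derivatives of f2, f3
    obtain ⟨c2, hc2⟩ : ∃ c, HasDerivAt (fun t => f2 t v) c u := by
      have hfun : (fun t => f2 t v)
          = fun t => (v ^ 2 / 2 - t) * g2 (t, v) - v * g1 (t, v) + g t v :=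
        funext fun t => ef2 t v
      rw [hfun]
      exact ⟨_, ((((hasDerivAt_const u (v ^ 2 / 2)).sub (hasDerivAt_id u)).mul
        (pd1_hasDerivAt hg2c u v)).sub ((pd1_hasDerivAt hg1c u v).const_mul v)).add
        (pd1_hasDerivAt hg u v)⟩
    obtain ⟨c3, hc3⟩ : ∃ c, HasDerivAt (fun t => f3 t v) c u := by
      have hfun : (fun t => f3 t v)
          = fun t => (v ^ 2 / 2 - t) * h2 (t, v) - v * h1 (t, v) + h t v :=
        funext fun t => ef3 t v
      rw [hfun]
      exact ⟨_, ((((hasDerivAt_const u (v ^ 2 / 2)).sub (hasDerivAt_id u)).mul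
        (pd1_hasDerivAt hh2c u v)).sub ((pd1_hasDerivAt hh1c u v).const_mul v)).add
        (pd1_hasDerivAt hh u v)⟩
    have hfu : deriv (fun t => f t v) u = ((1 : ℝ), c2, c3) := by
      have hfun : (fun t => f t v) = fun t => (t, f2 t v, f3 t v) := funext fun t => hf t v
      rw [hfun]
      exact ((hasDerivAt_id u).prodMk (hc2.prodMk hc3)).deriv
    -- v-direction derivatives of f2, f3
    have hv2 : HasDerivAt (fun w => f2 u w) ((v ^ 2 / 2 - u) * g3 (u, v)) v := by
      have hfun : (fun w => f2 u w)
          = fun w => (w ^ 2 / 2 - u) * g2 (u, w) - w * g1 (u, w) + g u w :=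
        funext fun w => ef2 u w
      rw [hfun]
      have H := ((((hasDerivAt_pow 2 v).div_const 2).sub (hasDerivAt_const v u)).mul
        (hg3d u v)).sub ((hasDerivAt_id v).mul (hg2d u v)) |>.add (hg1d u v)
      refine H.congr_deriv ?_
      simp only [id_eq, Pi.sub_apply]
      push_cast
      ring
    have hv3 : HasDerivAt (fun w => f3 u w) ((v ^ 2 / 2 - u) * h3 (u, v)) v := by
      have hfun : (fun w => f3 u w)
          = fun w => (w ^ 2 / 2 - u) * h2 (u, w) - w * h1 (u, w) + h u w :=
        funext fun w => ef3 u w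
      rw [hfun]
      have H := ((((hasDerivAt_pow 2 v).div_const 2).sub (hasDerivAt_const v u)).mul
        (hh3d u v)).sub ((hasDerivAt_id v).mul (hh2d u v)) |>.add (hh1d u v)
      refine H.congr_deriv ?_
      simp only [id_eq, Pi.sub_apply]
      push_cast
      ring
    have hfv : deriv (fun w => f u w) v
        = ((0 : ℝ), (v ^ 2 / 2 - u) * g3 (u, v), (v ^ 2 / 2 - u) * h3 (u, v)) := by
      have hfun : (fun w => f u w) = fun w => (u, f2 u w, f3 u w) := funext fun w => hf u w
      rw [hfun]
      exact ((hasDerivAt_const v u).prodMk (hv2.prodMk hv3)).deriv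
    constructor
    · rw [hν u v, hfu, hc2.deriv, hc3.deriv]
      simp only [dot3]
      ring
    · rw [hν u v, hfv, Eg3 u v, Eh3 u v]
      simp only [dot3]
      ring
  · intro hne h0
    rw [hν 0 0] at h0
    have e1 : deriv (deriv (deriv (g 0))) 0 = 0 := congrArg (fun p : ℝ × ℝ × ℝ => p.2.2) h0
    have e2 : -(deriv (deriv (deriv (h 0))) 0) = 0 := congrArg (fun p : ℝ × ℝ × ℝ => p.2.1) h0
    exact hne (by rw [e1, neg_eq_zero.mp e2])
end

section
/- Let g,h : ℝ² → ℝ be smooth with (g_vvv(0,0), h_vvv(0,0)) ≠ (0,0), let f = (f₁,f₂,f₃) : ℝ² → ℝ³ be defined by f(u,v) = (u, (v²/2 − u)·g_vv(u,v) − v·g_v(u,v) + g(u,v), (v²/2 − u)·h_vv(u,v) − v·h_v(u,v) + h(u,v)), and let ν₂(u,v) = (h_vvv(u,v)·(f₂)_u(u,v) − g_vvv(u,v)·(f₃)_u(u,v), −h_vvv(u,v), g_vvv(u,v)). Then the vectors ν₂(0,0) and (ν₂)_v(0,0) are linearly independent if and only if g_vvv(0,0)·h_vvvv(0,0) − g_vvvv(0,0)·h_vvv(0,0)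 ≠ 0. -/
namespace Stmt5Aux

noncomputable def pd1 (F : ℝ × ℝ → ℝ) (p : ℝ × ℝ) : ℝ := fderiv ℝ F p (1, 0)
noncomputable def pd2 (F : ℝ × ℝ → ℝ) (p : ℝ × ℝ) : ℝ := fderiv ℝ F p (0, 1)

theorem contDiff_pd1 {F : ℝ × ℝ → ℝ} (hF : ContDiff ℝ (⊤ : ℕ∞) F) : ContDiff ℝ (⊤ : ℕ∞) (pd1 F) :=
  (hF.fderiv_right (by simp)).clm_apply contDiff_const

theorem contDiff_pd2 {F : ℝ × ℝ → ℝ} (hF : ContDiff ℝ (⊤ : ℕ∞) F) : ContDiff ℝ (⊤ : ℕ∞) (pd2 F) :=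
  (hF.fderiv_right (by simp)).clm_apply contDiff_const

theorem hasDerivAt_pd1 {F : ℝ × ℝ → ℝ} (hF : ContDiff ℝ (⊤ : ℕ∞) F) (u v : ℝ) :
    HasDerivAt (fun t => F (t, v)) (pd1 F (u, v)) u := by
  have h1 : HasFDerivAt F (fderiv ℝ F (u, v)) (u, v) :=
    (hF.differentiable (by simp) (u, v)).hasFDerivAt
  have h2 : HasDerivAt (fun t : ℝ => ((t, v) : ℝ × ℝ)) (1, 0) u :=
    (hasDerivAt_id u).prodMk (hasDerivAt_const u v)
  exact h1.comp_hasDerivAt u h2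

theorem hasDerivAt_pd2 {F : ℝ × ℝ → ℝ} (hF : ContDiff ℝ (⊤ : ℕ∞) F) (u v : ℝ) :
    HasDerivAt (fun w => F (u, w)) (pd2 F (u, v)) v := by
  have h1 : HasFDerivAt F (fderiv ℝ F (u, v)) (u, v) :=
    (hF.differentiable (by simp) (u, v)).hasFDerivAt
  have h2 : HasDerivAt (fun w : ℝ => ((u, w) : ℝ × ℝ)) (0, 1) v :=
    (hasDerivAt_const v u).prodMk (hasDerivAt_id v)
  exact h1.comp_hasDerivAt v h2

theorem pd_symm {F : ℝ × ℝ → ℝ} (hF : ContDiff ℝ (⊤ : ℕ∞) F) (p : ℝ × ℝ) :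
    pd2 (pd1 F) p = pd1 (pd2 F) p := by
  have hd : DifferentiableAt ℝ (fderiv ℝ F) p :=
    (hF.fderiv_right (m := (⊤ : ℕ∞)) (by simp)).differentiable (by simp) p
  have hsymm : ∀ v w : ℝ × ℝ,
      fderiv ℝ (fderiv ℝ F) p v w = fderiv ℝ (fderiv ℝ F) p w v :=
    second_derivative_symmetric (fun y => (hF.differentiable (by simp) y).hasFDerivAt)
      hd.hasFDerivAt
  have h1 : pd2 (pd1 F) p = fderiv ℝ (fderiv ℝ F) p (0, 1) (1, 0) := by
    unfold pd1 pd2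
    rw [fderiv_clm_apply hd (differentiableAt_const _)]
    simp
  have h2 : pd1 (pd2 F) p = fderiv ℝ (fderiv ℝ F) p (1, 0) (0, 1) := by
    unfold pd1 pd2
    rw [fderiv_clm_apply hd (differentiableAt_const _)]
    simp
  rw [h1, h2, hsymm]

theorem key (g : ℝ → ℝ → ℝ) (hg : ContDiff ℝ (⊤ : ℕ∞) fun p : ℝ × ℝ => g p.1 p.2)
    (f2 : ℝ → ℝ → ℝ)
    (hf2 : ∀ u v : ℝ, f2 u v =
      (v ^ 2 / 2 - u) * deriv (deriv (g u)) v - v * deriv (g u) v + g u v) :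
    ∃ A : ℝ → ℝ, (∀ v, deriv (fun t => f2 t v) 0 = A v)
      ∧ HasDerivAt A (-(deriv (deriv (deriv (g 0))) 0)) 0
      ∧ HasDerivAt (deriv (deriv (deriv (g 0))))
          (deriv (deriv (deriv (deriv (g 0)))) 0) 0 := by
  set G : ℝ × ℝ → ℝ := fun p => g p.1 p.2 with hGdef
  have hD1 : ContDiff ℝ (⊤ : ℕ∞) (pd2 G) := contDiff_pd2 hg
  have hD2 : ContDiff ℝ (⊤ : ℕ∞) (pd2 (pd2 G)) := contDiff_pd2 hD1
  have hD3 : ContDiff ℝ (⊤ : ℕ∞) (pd2 (pd2 (pd2 G))) := contDiff_pd2 hD2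
  have e1 : ∀ u, deriv (g u) = fun v => pd2 G (u, v) := fun u =>
    funext fun v => (hasDerivAt_pd2 hg u v).deriv
  have e2 : ∀ u, deriv (deriv (g u)) = fun v => pd2 (pd2 G) (u, v) := fun u => by
    rw [e1 u]; exact funext fun v => (hasDerivAt_pd2 hD1 u v).deriv
  have e3 : ∀ u, deriv (deriv (deriv (g u))) = fun v => pd2 (pd2 (pd2 G)) (u, v) :=
    fun u => by
      rw [e2 u]; exact funext fun v => (hasDerivAt_pd2 hD2 u v).deriv
  have hg3d : HasDerivAt (deriv (deriv (deriv (g 0))))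
      (deriv (deriv (deriv (deriv (g 0)))) 0) 0 := by
    rw [e3 0, (hasDerivAt_pd2 hD3 0 0).deriv]
    exact hasDerivAt_pd2 hD3 0 0
  have hfeq : ∀ v : ℝ, (fun t => f2 t v) =
      fun t => (v ^ 2 / 2 - t) * pd2 (pd2 G) (t, v) - v * pd2 G (t, v) + G (t, v) :=
    fun v => funext fun t => by
      rw [hf2 t v, e2 t, e1 t]
  refine ⟨fun v => -pd2 (pd2 G) (0, v) + (v ^ 2 / 2) * pd1 (pd2 (pd2 G)) (0, v)
      - v * pd1 (pd2 G) (0, v) + pd1 G (0, v), fun v => ?_, ?_, hg3d⟩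
  · have k2 : HasDerivAt (fun t => pd2 (pd2 G) (t, v)) (pd1 (pd2 (pd2 G)) (0, v)) 0 :=
      hasDerivAt_pd1 hD2 0 v
    have k1 : HasDerivAt (fun t => pd2 G (t, v)) (pd1 (pd2 G) (0, v)) 0 :=
      hasDerivAt_pd1 hD1 0 v
    have k0 : HasDerivAt (fun t => G (t, v)) (pd1 G (0, v)) 0 :=
      hasDerivAt_pd1 hg 0 v
    have kc : HasDerivAt (fun t : ℝ => v ^ 2 / 2 - t) (-1) 0 := by
      simpa using (hasDerivAt_id (0 : ℝ)).const_sub (v ^ 2 / 2)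
    have ktot : HasDerivAt (fun t => (v ^ 2 / 2 - t) * pd2 (pd2 G) (t, v) - v * pd2 G (t, v)
        + G (t, v)) _ 0 := ((kc.mul k2).sub (k1.const_mul v)).add k0
    rw [hfeq v, ktot.deriv]
    ring
  · have hP2 : ContDiff ℝ (⊤ : ℕ∞) (pd1 (pd2 (pd2 G))) := contDiff_pd1 hD2
    have hP1 : ContDiff ℝ (⊤ : ℕ∞) (pd1 (pd2 G)) := contDiff_pd1 hD1
    have hP0 : ContDiff ℝ (⊤ : ℕ∞) (pd1 G) := contDiff_pd1 hg
    have m0 : HasDerivAt (fun v => pd2 (pd2 G) (0, v)) (pd2 (pd2 (pd2 G)) (0, 0)) 0 :=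
      hasDerivAt_pd2 hD2 0 0
    have m2 : HasDerivAt (fun v => pd1 (pd2 (pd2 G)) (0, v))
        (pd2 (pd1 (pd2 (pd2 G))) (0, 0)) 0 := hasDerivAt_pd2 hP2 0 0
    have m1 : HasDerivAt (fun v => pd1 (pd2 G) (0, v)) (pd2 (pd1 (pd2 G)) (0, 0)) 0 :=
      hasDerivAt_pd2 hP1 0 0
    have m00 : HasDerivAt (fun v => pd1 G (0, v)) (pd2 (pd1 G) (0, 0)) 0 :=
      hasDerivAt_pd2 hP0 0 0
    have msq : HasDerivAt (fun v : ℝ => v ^ 2 / 2) 0 0 := by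
      simpa using (hasDerivAt_pow 2 (0 : ℝ)).div_const 2
    have mid : HasDerivAt (fun v : ℝ => v) 1 0 := hasDerivAt_id 0
    have mtot : HasDerivAt (fun v => -pd2 (pd2 G) (0, v) + (v ^ 2 / 2) * pd1 (pd2 (pd2 G)) (0, v)
        - v * pd1 (pd2 G) (0, v) + pd1 G (0, v)) _ 0 := ((m0.neg.add (msq.mul m2)).sub (mid.mul m1)).add m00
    convert mtot using 1
    simp only [e3, pd_symm hg (0, 0)]
    ring

theorem finalAux (p q r s α β : ℝ) :
    LinearIndependent ℝ ![((p * α - q * β, -p, q) : ℝ × ℝ × ℝ),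
      (r * α + p * -q - (s * β + q * -p), -r, s)] ↔ q * r - s * p ≠ 0 := by
  rw [LinearIndependent.pair_iff]
  constructor
  · intro hli hzero
    by_cases hpq : p = 0 ∧ q = 0
    · obtain ⟨hp, hq⟩ := hpq
      have := (hli 1 0 (by
        subst hp; subst hq
        simp only [Prod.smul_mk, smul_eq_mul, Prod.mk_add_mk, Prod.mk_eq_zero]
        refine ⟨by ring, by ring, by ring⟩)).1
      exact one_ne_zero this
    · have h1 := hli r (-p) (by
        simp only [Prod.smul_mk, smul_eq_mul, Prod.mk_add_mk, Prod.mk_eq_zero]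
        refine ⟨by linear_combination (-β) * hzero, by ring, by linear_combination hzero⟩)
      have h2 := hli s (-q) (by
        simp only [Prod.smul_mk, smul_eq_mul, Prod.mk_add_mk, Prod.mk_eq_zero]
        refine ⟨by linear_combination (-α) * hzero, by linear_combination hzero, by ring⟩)
      exact hpq ⟨neg_eq_zero.mp h1.2, neg_eq_zero.mp h2.2⟩
  · intro hne0 c d hcd
    simp only [Prod.smul_mk, smul_eq_mul, Prod.mk_add_mk, Prod.mk_eq_zero] at hcd
    obtain ⟨hc1, hc2, hc3⟩ := hcd
    have hc : c * (q * r - s * p) = 0 := by linear_combination r * hc3 + s * hc2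
    have hd : d * (q * r - s * p) = 0 := by linear_combination (-q) * hc2 + (-p) * hc3
    exact ⟨(mul_eq_zero.mp hc).resolve_right hne0, (mul_eq_zero.mp hd).resolve_right hne0⟩

end Stmt5Aux

open Stmt5Aux in


/-- For the normal form `f` of a singular point of the second kind with normal
vector field `ν₂`, the vectors `ν₂(0,0)` and `(ν₂)_v(0,0)` are linearly
independent iff `g_vvv(0,0)·h_vvvv(0,0) − g_vvvv(0,0)·h_vvv(0,0) ≠ 0`
(the front/swallowtail condition). -/
theorem stmt_5 (g h : ℝ → ℝ → ℝ)
    (hg : ContDiff ℝ (⊤ : ℕ∞) (fun p : ℝ × ℝ => g p.1 p.2))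
    (hh : ContDiff ℝ (⊤ : ℕ∞) (fun p : ℝ × ℝ => h p.1 p.2))
    (hne : (deriv (deriv (deriv (g 0))) 0, deriv (deriv (deriv (h 0))) 0) ≠ (0, 0))
    (f2 f3 : ℝ → ℝ → ℝ)
    (hf2 : ∀ u v : ℝ, f2 u v =
      (v ^ 2 / 2 - u) * deriv (deriv (g u)) v - v * deriv (g u) v + g u v)
    (hf3 : ∀ u v : ℝ, f3 u v =
      (v ^ 2 / 2 - u) * deriv (deriv (h u)) v - v * deriv (h u) v + h u v)
    (f : ℝ → ℝ → ℝ × ℝ × ℝ)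
    (hf : ∀ u v : ℝ, f u v = (u, f2 u v, f3 u v))
    (ν₂ : ℝ → ℝ → ℝ × ℝ × ℝ)
    (hν : ∀ u v : ℝ, ν₂ u v =
      (deriv (deriv (deriv (h u))) v * deriv (fun t => f2 t v) u
          - deriv (deriv (deriv (g u))) v * deriv (fun t => f3 t v) u,
        -(deriv (deriv (deriv (h u))) v), deriv (deriv (deriv (g u))) v)) :
    LinearIndependent ℝ ![ν₂ 0 0, deriv (fun w => ν₂ 0 w) 0] ↔
      deriv (deriv (deriv (g 0))) 0 * deriv (deriv (deriv (deriv (h 0)))) 0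
        - deriv (deriv (deriv (deriv (g 0)))) 0 * deriv (deriv (deriv (h 0))) 0 ≠ 0 := by
  obtain ⟨A, hA, hA', hg3d⟩ := key g hg f2 hf2
  obtain ⟨B, hB, hB', hh3d⟩ := key h hh f3 hf3
  have hx : ν₂ 0 0 = (deriv (deriv (deriv (h 0))) 0 * A 0
      - deriv (deriv (deriv (g 0))) 0 * B 0,
      -(deriv (deriv (deriv (h 0))) 0), deriv (deriv (deriv (g 0))) 0) := by
    rw [hν 0 0, hA 0, hB 0]
  have hxy : (fun w => ν₂ 0 w) = fun w =>
      (deriv (deriv (deriv (h 0))) w * A w - deriv (deriv (deriv (g 0))) w * B w,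
        -(deriv (deriv (deriv (h 0))) w), deriv (deriv (deriv (g 0))) w) :=
    funext fun w => by rw [hν 0 w, hA w, hB w]
  have h1 := (hh3d.mul hA').sub (hg3d.mul hB')
  have htup := h1.prodMk (hh3d.neg.prodMk hg3d)
  have hy : deriv (fun w => ν₂ 0 w) 0 =
      (deriv (deriv (deriv (deriv (h 0)))) 0 * A 0
          + deriv (deriv (deriv (h 0))) 0 * -(deriv (deriv (deriv (g 0))) 0)
        - (deriv (deriv (deriv (deriv (g 0)))) 0 * B 0
          + deriv (deriv (deriv (g 0))) 0 * -(deriv (deriv (deriv (h 0))) 0)),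
        -(deriv (deriv (deriv (deriv (h 0)))) 0),
        deriv (deriv (deriv (deriv (g 0)))) 0) := by
    rw [hxy]
    exact htup.deriv
  rw [hx, hy]
  exact finalAux (deriv (deriv (deriv (h 0))) 0) (deriv (deriv (deriv (g 0))) 0)
    (deriv (deriv (deriv (deriv (h 0)))) 0) (deriv (deriv (deriv (deriv (g 0)))) 0)
    (A 0) (B 0)
end

section
/- Let λ : ℝ² → ℝ be smooth with λ(0,0) = 0 and dλ(0,0) ≠ 0, and let k ≥ 1 be an integer. For a smooth vector field X : ℝ² → ℝ² and a smooth function φ, define (X·φ)(p) = dφ_p(X(p)) and iterate: X^i·φ = X·(X^{i−1}·φ). Let X̃ and X̄ be smooth vector fields with X̃(0,0) ≠ 0, and suppose there is a smooth function h : ℝ² → ℝ with h(0,0) ≠ 0 such that X̄(p) = h(p)·X̃(p) for every p with λ(p) = 0. If (X̃^i·λ)(0,0) = 0 for all 1 ≤ i ≤ k−1 and (X̃^k·λ)(0,0) ≠ 0, then (X̄^i·λ)(0,0) = 0 for all 1 ≤ i ≤ k−1 and (X̄^k·λ)(0,0) ≠ 0. -/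
open scoped ContDiff Convolution
open ContinuousLinearMap MeasureTheory Set


lemma clm_ext2 {E : Type*} [NormedAddCommGroup E] [NormedSpace ℝ E]
    {T S : ℝ × ℝ →L[ℝ] E} (h1 : T (1, 0) = S (1, 0)) (h2 : T (0, 1) = S (0, 1)) : T = S := by
  ext
  · simpa using h1
  · simpa using h2

section
variable (a b : ℝ)

noncomputable def Tfwd : ℝ × ℝ →L[ℝ] ℝ × ℝ :=
  ((a • fst ℝ ℝ ℝ) + (b • snd ℝ ℝ ℝ)).prod (((-b) • fst ℝ ℝ ℝ) + (a • snd ℝ ℝ ℝ))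

noncomputable def Tinv : ℝ × ℝ →L[ℝ] ℝ × ℝ :=
  (((a / (a^2+b^2)) • fst ℝ ℝ ℝ) + ((-b / (a^2+b^2)) • snd ℝ ℝ ℝ)).prod
    (((b / (a^2+b^2)) • fst ℝ ℝ ℝ) + ((a / (a^2+b^2)) • snd ℝ ℝ ℝ))

noncomputable def Aequiv (hab : a^2 + b^2 ≠ 0) : (ℝ × ℝ) ≃L[ℝ] (ℝ × ℝ) :=
  ContinuousLinearEquiv.equivOfInverse (Tfwd a b) (Tinv a b)
    (fun p => by
      simp only [Tfwd, Tinv, prod_apply, ContinuousLinearMap.add_apply, coe_smul',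
        Pi.smul_apply, coe_fst', coe_snd', smul_eq_mul]
      ext <;> (field_simp; ring))
    (fun p => by
      simp only [Tfwd, Tinv, prod_apply, ContinuousLinearMap.add_apply, coe_smul',
        Pi.smul_apply, coe_fst', coe_snd', smul_eq_mul]
      ext <;> (field_simp; ring))

end

set_option maxHeartbeats 1000000 in
lemma straighten (lam : ℝ × ℝ → ℝ) (hlam : ContDiff ℝ (⊤ : ℕ∞) lam)
    (hlam0 : lam (0, 0) = 0) (hdlam : fderiv ℝ lam (0, 0) ≠ 0) :
    ∃ (σ Φ : ℝ × ℝ → ℝ × ℝ) (r : ℝ), 0 < r ∧ ContDiff ℝ ∞ Φ ∧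
      (∀ p, (Φ p).1 = lam p) ∧ Φ (0, 0) = (0, 0) ∧
      ContDiffOn ℝ ∞ σ (Metric.ball (0 : ℝ × ℝ) r) ∧
      (∀ y ∈ Metric.ball ((0 : ℝ) , (0:ℝ)) r, Φ (σ y) = y) ∧
      (∀ᶠ p in nhds ((0 : ℝ), (0 : ℝ)), σ (Φ p) = p) := by
  set a := fderiv ℝ lam (0, 0) (1, 0) with ha
  set b := fderiv ℝ lam (0, 0) (0, 1) with hb
  have hab : a ^ 2 + b ^ 2 ≠ 0 := by
    intro hz
    have ha0 : a = 0 := by nlinarith [sq_nonneg a, sq_nonneg b]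
    have hb0 : b = 0 := by nlinarith [sq_nonneg a, sq_nonneg b]
    apply hdlam
    apply clm_ext2 (S := 0)
    · rw [ContinuousLinearMap.zero_apply, ← ha]; exact ha0
    · rw [ContinuousLinearMap.zero_apply, ← hb]; exact hb0
  set Φ : ℝ × ℝ → ℝ × ℝ := fun p => (lam p, -b * p.1 + a * p.2) with hΦdef
  have hΦω : ContDiff ℝ ∞ Φ :=
    hlam.prodMk ((contDiff_const.mul contDiff_fst).add (contDiff_const.mul contDiff_snd))
  have hT1 : fderiv ℝ lam (0, 0) = (a • fst ℝ ℝ ℝ) + (b • snd ℝ ℝ ℝ) := by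
    apply clm_ext2 <;>
      · simp only [ContinuousLinearMap.add_apply, coe_smul', Pi.smul_apply, coe_fst', coe_snd',
          smul_eq_mul, mul_one, mul_zero, add_zero, zero_add]; rfl
  have hlin : (fun p : ℝ × ℝ => -b * p.1 + a * p.2)
      = ⇑(((-b) • fst ℝ ℝ ℝ) + (a • snd ℝ ℝ ℝ)) := by
    funext p; simp
  have hA : HasFDerivAt Φ ((Aequiv a b hab : (ℝ × ℝ) ≃L[ℝ] (ℝ × ℝ)) :
      ℝ × ℝ →L[ℝ] ℝ × ℝ) (0, 0) := by
    have h1 : HasFDerivAt lam ((a • fst ℝ ℝ ℝ) + (b • snd ℝ ℝ ℝ)) (0, 0) := by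
      rw [← hT1]
      exact ((hlam.differentiable (by simp)) (0, 0)).hasFDerivAt
    have h2 : HasFDerivAt (fun p : ℝ × ℝ => -b * p.1 + a * p.2)
        (((-b) • fst ℝ ℝ ℝ) + (a • snd ℝ ℝ ℝ)) (0, 0) := by
      rw [hlin]; exact (((-b) • fst ℝ ℝ ℝ) + (a • snd ℝ ℝ ℝ)).hasFDerivAt
    exact h1.prodMk h2
  have hn : (∞ : WithTop ℕ∞) ≠ 0 := by simp
  set σ := (hΦω.contDiffAt).localInverse hA hn with hσdef
  have hΦ0 : Φ (0, 0) = (0, 0) := by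
    have h0' : lam 0 = 0 := hlam0
    simp [hΦdef, hlam0, h0']
  have hσω : ContDiffAt ℝ ∞ σ ((0 : ℝ), (0 : ℝ)) := by
    have := (hΦω.contDiffAt).to_localInverse hA hn
    rwa [hΦ0] at this
  have hstrict : HasStrictFDerivAt Φ ((Aequiv a b hab : (ℝ × ℝ) ≃L[ℝ] (ℝ × ℝ)) :
      ℝ × ℝ →L[ℝ] ℝ × ℝ) (0, 0) := (hΦω.contDiffAt).hasStrictFDerivAt' hA hn
  have hright : ∀ᶠ y in nhds ((0 : ℝ), (0 : ℝ)), Φ (σ y) = y := by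
    have := hstrict.eventually_right_inverse
    rwa [hΦ0] at this
  have hleft : ∀ᶠ p in nhds ((0 : ℝ), (0 : ℝ)), σ (Φ p) = p := hstrict.eventually_left_inverse
  -- analytic neighborhood for σ
  have hana : ∀ᶠ y in nhds ((0 : ℝ), (0 : ℝ)), ContDiffAt ℝ ∞ σ y := by
    have hσe : σ = (hstrict.toOpenPartialHomeomorph Φ).symm := rfl
    have hσ0 : σ (0, 0) = (0, 0) := by
      have := hleft.self_of_nhds
      rwa [hΦ0] at this
    have hcont : ContinuousAt σ (0, 0) := hσω.continuousAt
    have hopen : ∀ᶠ p in nhds ((0 : ℝ), (0 : ℝ)),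
        fderiv ℝ Φ p ∈ range ((↑) : ((ℝ × ℝ) ≃L[ℝ] (ℝ × ℝ)) → (ℝ × ℝ →L[ℝ] ℝ × ℝ)) := by
      have hc : ContinuousAt (fderiv ℝ Φ) (0, 0) := (hΦω.continuous_fderiv (by simp)).continuousAt
      apply hc.preimage_mem_nhds
      apply ContinuousLinearEquiv.isOpen.mem_nhds
      exact ⟨Aequiv a b hab, hA.fderiv.symm⟩
    have htgt : ∀ᶠ y in nhds ((0 : ℝ), (0 : ℝ)), y ∈ (hstrict.toOpenPartialHomeomorph Φ).target := by
      have := (hstrict.toOpenPartialHomeomorph Φ).open_target.mem_nhds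
        hstrict.image_mem_toOpenPartialHomeomorph_target
      rwa [hΦ0] at this
    have hopen' : ∀ᶠ y in nhds ((0 : ℝ), (0 : ℝ)),
        fderiv ℝ Φ (σ y) ∈ range ((↑) : ((ℝ × ℝ) ≃L[ℝ] (ℝ × ℝ)) → (ℝ × ℝ →L[ℝ] ℝ × ℝ)) :=
      hcont.eventually (by rw [hσ0]; exact hopen)
    filter_upwards [htgt, hopen'] with y hy hf
    obtain ⟨f₀, hf₀⟩ := hf
    rw [hσe]
    apply (hstrict.toOpenPartialHomeomorph Φ).contDiffAt_symm hy (f₀' := f₀)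
    · rw [hf₀]; exact ((hΦω.differentiable (by simp)) _).hasFDerivAt
    · exact hΦω.contDiffAt
  obtain ⟨r, hr, hball⟩ := Metric.eventually_nhds_iff_ball.1 (hana.and hright)
  refine ⟨σ, Φ, r, hr, hΦω, fun p => rfl, hΦ0, ?_, fun y hy => (hball y hy).2, hleft⟩
  intro y hy
  exact (hball y hy).1.contDiffWithinAt

set_option maxHeartbeats 1000000 in
lemma division (lam : ℝ × ℝ → ℝ) (hlam : ContDiff ℝ (⊤ : ℕ∞) lam)
    (hlam0 : lam (0, 0) = 0) (hdlam : fderiv ℝ lam (0, 0) ≠ 0)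
    (g : ℝ × ℝ → ℝ × ℝ) (hg : ContDiff ℝ ∞ g) (hgS : ∀ p, lam p = 0 → g p = 0) :
    ∃ U : Set (ℝ × ℝ), IsOpen U ∧ (0, 0) ∈ U ∧
      ∃ Y : ℝ × ℝ → ℝ × ℝ, ContDiff ℝ ∞ Y ∧ ∀ p ∈ U, g p = lam p • Y p := by
  obtain ⟨σ, Φ, r, hr, hΦ, hΦ1, hΦ0, hσ, hright, hleft⟩ := straighten lam hlam hlam0 hdlam
  set W := Metric.ball ((0:ℝ), (0:ℝ)) r with hWdef
  have hWopen : IsOpen W := Metric.isOpen_ball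
  set gh : ℝ × ℝ → ℝ × ℝ := fun y => g (σ y) with ghdef
  have hgh : ContDiffOn ℝ ∞ gh W := hg.comp_contDiffOn hσ
  set E' : ℝ × ℝ → ℝ × ℝ := fun w => fderiv ℝ gh w ((1:ℝ), (0:ℝ)) with hE'def
  have hE' : ContDiffOn ℝ ∞ E' W :=
    (hgh.fderiv_of_isOpen hWopen (by simp)).clm_apply contDiffOn_const
  set ρ : ContDiffBump ((0:ℝ), (0:ℝ)) := ⟨r/2, 3*r/4, by positivity, by linarith⟩ with hρdef
  set Eh : ℝ × ℝ → ℝ × ℝ := W.indicator (fun w => ρ w • E' w) with hEhdef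
  have hEh : ContDiff ℝ ∞ Eh := by
    rw [contDiff_iff_contDiffAt]
    intro w
    by_cases hw : w ∈ W
    · have h1 : ContDiffAt ℝ ∞ (fun w => ρ w • E' w) w :=
        (ρ.contDiffAt).smul (hE'.contDiffAt (hWopen.mem_nhds hw))
      refine h1.congr_of_eventuallyEq ?_
      filter_upwards [hWopen.mem_nhds hw] with y hy
      rw [hEhdef]; exact Set.indicator_of_mem hy _
    · have hw' : w ∉ Metric.closedBall ((0:ℝ), (0:ℝ)) (3*r/4) := by
        intro hmem
        exact hw (Metric.closedBall_subset_ball (by linarith) hmem)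
      have h0 : ContDiffAt ℝ ∞ (fun _ : ℝ × ℝ => (0 : ℝ × ℝ)) w := contDiffAt_const
      refine h0.congr_of_eventuallyEq ?_
      filter_upwards [(Metric.isClosed_closedBall.isOpen_compl).mem_nhds hw'] with y hy
      rw [hEhdef]
      by_cases hyW : y ∈ W
      · rw [Set.indicator_of_mem hyW]
        have : ρ y = 0 := by
          apply ρ.zero_of_le_dist
          exact le_of_lt (not_le.mp hy)
        simp [this]
      · exact Set.indicator_of_notMem hyW _
  have hEheq : ∀ w ∈ Metric.ball ((0:ℝ), (0:ℝ)) (r/2), Eh w = fderiv ℝ gh w ((1:ℝ), (0:ℝ)) := by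
    intro w hw
    have hwW : w ∈ W := Metric.ball_subset_ball (by linarith) hw
    rw [hEhdef, Set.indicator_of_mem hwW]
    have h1 : ρ w = 1 := ρ.one_of_mem_closedBall (Metric.ball_subset_closedBall hw)
    rw [h1, one_smul]
  -- the bump function in the integration variable
  set χ : ContDiffBump ((-1/2 : ℝ)) := ⟨1/2, 1, by norm_num, by norm_num⟩ with hχdef
  have hχ1 : ∀ t ∈ Set.Icc (0:ℝ) 1, χ (-t) = 1 := by
    intro t ht
    apply χ.one_of_mem_closedBall
    rw [Metric.mem_closedBall, Real.dist_eq]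
    rw [Set.mem_Icc] at ht
    rw [abs_le]
    constructor <;> [skip; skip] <;> simp only [hχdef] <;> linarith [ht.1, ht.2]
  have hχ0 : ∀ s : ℝ, s ∉ Metric.closedBall (-1/2 : ℝ) 1 → χ s = 0 := by
    intro s hs
    rw [← Function.notMem_support, χ.support_eq]
    intro hmem
    exact hs (Metric.ball_subset_closedBall hmem)
  set gg : ℝ × ℝ → ℝ → ℝ × ℝ := fun y s => χ s • Eh (-s * y.1, y.2) with hggdef
  have hgg : ContDiff ℝ ∞ (Function.uncurry gg) := by
    apply ContDiff.fun_smul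
    · exact χ.contDiff.comp contDiff_snd
    · exact hEh.comp (((contDiff_snd.neg).mul (contDiff_fst.fst)).prodMk contDiff_fst.snd)
  set f : ℝ → ℝ := Set.indicator (Set.Ioc (0:ℝ) 1) (fun _ => (1:ℝ)) with hfdef
  have hf : LocallyIntegrable f volume := by
    apply Integrable.locallyIntegrable
    rw [hfdef, integrable_indicator_iff measurableSet_Ioc]
    exact integrableOn_const (by simp)
  set L : ℝ →L[ℝ] (ℝ × ℝ) →L[ℝ] (ℝ × ℝ) := ContinuousLinearMap.lsmul ℝ ℝ with hLdef
  have hconv : ContDiffOn ℝ (((⊤:ℕ∞)) : WithTop ℕ∞)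
      (fun q : (ℝ × ℝ) × ℝ => (f ⋆[L, volume] gg q.1) q.2) (univ ×ˢ univ) := by
    apply contDiffOn_convolution_right_with_param (n := (⊤:ℕ∞)) L isOpen_univ
      (isCompact_closedBall (-1/2 : ℝ) 1)
    · intro p x _ hx
      simp [hggdef, hχ0 x hx]
    · exact hf
    · exact hgg.contDiffOn.mono (Set.subset_univ _)
  have hconv' : ContDiff ℝ ∞ (fun q : (ℝ × ℝ) × ℝ => (f ⋆[L, volume] gg q.1) q.2) := by
    rw [← contDiffOn_univ]
    simpa [Set.univ_prod_univ] using hconv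
  set G : ℝ × ℝ → ℝ × ℝ := fun y => (f ⋆[L, volume] gg y) 0 with hGdef
  have hG : ContDiff ℝ ∞ G := hconv'.comp (contDiff_id.prodMk contDiff_const)
  have hGeq : ∀ y : ℝ × ℝ, G y = ∫ t in (0:ℝ)..1, Eh (t * y.1, y.2) := by
    intro y
    have hGy : G y = (f ⋆[L, volume] gg y) 0 := rfl
    rw [hGy, convolution_def]
    have step1 : (fun t => L (f t) (gg y (0 - t)))
        = Set.indicator (Set.Ioc (0:ℝ) 1) (fun t => gg y (-t)) := by
      funext t
      by_cases ht : t ∈ Set.Ioc (0:ℝ) 1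
      · rw [Set.indicator_of_mem ht, hfdef, Set.indicator_of_mem ht]
        simp [hLdef]
      · rw [Set.indicator_of_notMem ht, hfdef, Set.indicator_of_notMem ht]
        simp [hLdef]
    rw [step1, integral_indicator measurableSet_Ioc]
    rw [intervalIntegral.integral_of_le zero_le_one]
    apply setIntegral_congr_fun measurableSet_Ioc
    intro t ht
    have h1 : χ (-t) = 1 := hχ1 t (Set.Ioc_subset_Icc_self ht)
    simp only [hggdef, h1, one_smul, neg_neg]
  -- FTC: gh y = y.1 • G y on the small ball
  have hFTC : ∀ y ∈ Metric.ball ((0:ℝ), (0:ℝ)) (r/2), gh y = y.1 • G y := by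
    intro y hy
    have hdisty : dist y ((0:ℝ), (0:ℝ)) < r/2 := Metric.mem_ball.1 hy
    have hmem : ∀ t ∈ Set.Icc (0:ℝ) 1, ((t * y.1, y.2) : ℝ × ℝ) ∈ Metric.ball ((0:ℝ),(0:ℝ)) (r/2) := by
      intro t ht
      rw [Set.mem_Icc] at ht
      rw [Metric.mem_ball]
      have h1 : dist ((t * y.1, y.2) : ℝ × ℝ) ((0:ℝ),(0:ℝ)) =
          max (dist (t * y.1) 0) (dist y.2 0) := Prod.dist_eq
      have h2 : dist y ((0:ℝ),(0:ℝ)) = max (dist y.1 0) (dist y.2 0) := Prod.dist_eq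
      have h3 : dist (t * y.1) 0 ≤ dist y.1 0 := by
        rw [Real.dist_eq, Real.dist_eq, sub_zero, sub_zero, abs_mul]
        calc |t| * |y.1| ≤ 1 * |y.1| := by
              apply mul_le_mul_of_nonneg_right _ (abs_nonneg _)
              rw [abs_le]; constructor <;> linarith [ht.1, ht.2]
          _ = |y.1| := one_mul _
      rw [h1]
      rw [h2] at hdisty
      exact lt_of_le_of_lt (max_le_max h3 le_rfl) hdisty
    have hderiv : ∀ t ∈ Set.uIcc (0:ℝ) 1,
        HasDerivAt (fun t : ℝ => gh (t * y.1, y.2)) (y.1 • Eh (t * y.1, y.2)) t := by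
      intro t ht
      rw [Set.uIcc_of_le zero_le_one] at ht
      set w : ℝ × ℝ := (t * y.1, y.2) with hwdef
      have hwball := hmem t ht
      have hwW : w ∈ W := Metric.ball_subset_ball (by linarith) hwball
      have hdiff : DifferentiableAt ℝ gh w :=
        (hgh.differentiableOn (by simp)).differentiableAt (hWopen.mem_nhds hwW)
      have hcurve : HasDerivAt (fun t : ℝ => ((t * y.1, y.2) : ℝ × ℝ)) ((y.1, 0)) t := by
        have h1 : HasDerivAt (fun t : ℝ => t * y.1) y.1 t := by
          simpa using (hasDerivAt_id t).mul_const y.1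
        exact h1.prodMk (hasDerivAt_const t y.2)
      have hcomp := hdiff.hasFDerivAt.comp_hasDerivAt t hcurve
      have hlin : fderiv ℝ gh w ((y.1, 0)) = y.1 • Eh w := by
        have h1 : ((y.1, (0:ℝ)) : ℝ × ℝ) = y.1 • ((1:ℝ), (0:ℝ)) := by simp
        rw [h1, ContinuousLinearMap.map_smul, ← hEheq w hwball]
      rwa [hlin] at hcomp
    have hint : IntervalIntegrable (fun t : ℝ => y.1 • Eh (t * y.1, y.2)) volume 0 1 := by
      apply Continuous.intervalIntegrable
      exact (hEh.continuous.comp (by fun_prop)).const_smul y.1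
    have heq := intervalIntegral.integral_eq_sub_of_hasDerivAt hderiv hint
    have hgh0 : gh ((0:ℝ), y.2) = 0 := by
      have h0mem : ((0:ℝ), y.2) ∈ Metric.ball ((0:ℝ),(0:ℝ)) (r/2) := by
        have := hmem 0 (by constructor <;> norm_num)
        simpa using this
      have h0W : ((0:ℝ), y.2) ∈ W := Metric.ball_subset_ball (by linarith) h0mem
      have hΦσ : Φ (σ ((0:ℝ), y.2)) = ((0:ℝ), y.2) := hright _ h0W
      have hlamσ : lam (σ ((0:ℝ), y.2)) = 0 := by
        rw [← hΦ1]
        rw [hΦσ]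
      exact hgS _ hlamσ
    have h1mul : ((1:ℝ) * y.1, y.2) = y := by simp
    have h0mul : ((0:ℝ) * y.1, y.2) = ((0:ℝ), y.2) := by norm_num
    rw [h1mul, h0mul, hgh0, sub_zero] at heq
    rw [← heq, intervalIntegral.integral_smul, ← hGeq y]
  -- assemble
  obtain ⟨V, hVeq, hVopen, hV0⟩ := eventually_nhds_iff.1 hleft
  refine ⟨V ∩ Φ ⁻¹' (Metric.ball ((0:ℝ),(0:ℝ)) (r/2)), hVopen.inter (hΦ.continuous.isOpen_preimage _ Metric.isOpen_ball), ⟨hV0, ?_⟩, fun p => G (Φ p), hG.comp hΦ, ?_⟩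
  · simp only [Set.mem_preimage, hΦ0]
    exact Metric.mem_ball_self (by linarith)
  · rintro p ⟨hpV, hpB⟩
    have h1 : gh (Φ p) = (Φ p).1 • G (Φ p) := hFTC _ hpB
    have h2 : gh (Φ p) = g p := by
      rw [ghdef]
      simp only []
      rw [hVeq p hpV]
    rw [← h2, h1, hΦ1]

/-- Directional derivative of a function along a vector field on `ℝ²`:
`(X·φ)(p) = dφ_p(X(p))`. -/
noncomputable def dirDeriv (X : ℝ × ℝ → ℝ × ℝ) (φ : ℝ × ℝ → ℝ) : ℝ × ℝ → ℝ :=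
  fun p => fderiv ℝ φ p (X p)

/-- Iterated directional derivative: `X^0·φ = φ`, `X^i·φ = X·(X^{i−1}·φ)`. -/
noncomputable def dirDerivIter (X : ℝ × ℝ → ℝ × ℝ) : ℕ → (ℝ × ℝ → ℝ) → (ℝ × ℝ → ℝ)
  | 0, φ => φ
  | n + 1, φ => dirDeriv X (dirDerivIter X n φ)

lemma contDiff_dirDerivIter {X : ℝ × ℝ → ℝ × ℝ} {φ : ℝ × ℝ → ℝ}
    (hX : ContDiff ℝ ∞ X) (hφ : ContDiff ℝ ∞ φ) (i : ℕ) :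
    ContDiff ℝ ∞ (dirDerivIter X i φ) := by
  induction i with
  | zero => exact hφ
  | succ n ih => exact (ih.fderiv_right (m := ∞) (by simp)).clm_apply hX

/-- The iterated-derivative criterion for singular points of the `k`-th kind
does not depend on the choice of the (extended) null vector field: if `X̄ = h·X̃`
on `λ⁻¹(0)` with `h(0,0) ≠ 0`, then `X̃` and `X̄` yield the same
vanishing/nonvanishing pattern of iterated derivatives of `λ` at the origin. -/
theorem stmt_6 (lam : ℝ × ℝ → ℝ) (hlam : ContDiff ℝ (⊤ : ℕ∞) lam)
    (hlam0 : lam (0, 0) = 0) (hdlam : fderiv ℝ lam (0, 0) ≠ 0)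
    (k : ℕ) (hk : 1 ≤ k)
    (Xt Xb : ℝ × ℝ → ℝ × ℝ)
    (hXt : ContDiff ℝ (⊤ : ℕ∞) Xt) (hXb : ContDiff ℝ (⊤ : ℕ∞) Xb)
    (hXt0 : Xt (0, 0) ≠ 0)
    (h : ℝ × ℝ → ℝ) (hh : ContDiff ℝ (⊤ : ℕ∞) h) (hh0 : h (0, 0) ≠ 0)
    (hprop : ∀ p : ℝ × ℝ, lam p = 0 → Xb p = h p • Xt p)
    (hvan : ∀ i : ℕ, 1 ≤ i → i < k → dirDerivIter Xt i lam (0, 0) = 0)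
    (hnz : dirDerivIter Xt k lam (0, 0) ≠ 0) :
    (∀ i : ℕ, 1 ≤ i → i < k → dirDerivIter Xb i lam (0, 0) = 0)
      ∧ dirDerivIter Xb k lam (0, 0) ≠ 0 := by
  have hlamS : ContDiff ℝ ∞ lam := hlam.of_le (by simp)
  have hXtS : ContDiff ℝ ∞ Xt := hXt.of_le (by simp)
  have hXbS : ContDiff ℝ ∞ Xb := hXb.of_le (by simp)
  have hhS : ContDiff ℝ ∞ h := hh.of_le (by simp)
  have hμ : ∀ j, ContDiff ℝ ∞ (dirDerivIter Xt j lam) := contDiff_dirDerivIter hXtS hlamS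
  obtain ⟨U, hUopen, hU0, Y, hY, hYeq⟩ := division lam hlam hlam0 hdlam
    (fun p => Xb p - h p • Xt p) (hXbS.sub (hhS.smul hXtS))
    (fun p hp => sub_eq_zero.2 (hprop p hp))
  have hXbY : ∀ p ∈ U, Xb p = h p • Xt p + lam p • Y p := by
    intro p hp
    have := hYeq p hp
    rw [sub_eq_iff_eq_add'] at this
    exact this
  have key : ∀ i : ℕ, i ≤ k → ∃ c : ℕ → ℝ × ℝ → ℝ,
      (∀ j, ContDiffOn ℝ ∞ (c j) U) ∧
      (∀ p ∈ U, dirDerivIter Xb i lam p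
        = ∑ j ∈ Finset.range (i + 1), c j p * dirDerivIter Xt j lam p) ∧
      (∀ p ∈ U, c i p = h p ^ i) := by
    intro i
    induction i with
    | zero =>
      intro _
      refine ⟨fun _ _ => 1, fun j => contDiffOn_const, fun p _ => ?_, fun p _ => by norm_num⟩
      simp [dirDerivIter]
    | succ n ih =>
      intro hik
      obtain ⟨c, hc, hrep, htop⟩ := ih (le_trans (Nat.le_succ n) hik)
      set μ : ℕ → ℝ × ℝ → ℝ := fun j => dirDerivIter Xt j lam with hμdef
      set c' : ℕ → ℝ × ℝ → ℝ := fun m p =>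
        (if m = 0 then ∑ j ∈ Finset.range (n + 1), c j p * fderiv ℝ (μ j) p (Y p) else 0)
        + (if m ≤ n then fderiv ℝ (c m) p (Xb p) else 0)
        + (if 1 ≤ m then h p * c (m - 1) p else 0) with hc'def
      refine ⟨c', ?_, ?_, ?_⟩
      · intro m
        rw [hc'def]
        refine ContDiffOn.add (ContDiffOn.add ?_ ?_) ?_
        · by_cases hm : m = 0
          · simp only [if_pos hm]
            refine ContDiffOn.sum (fun j _ => (hc j).mul ?_)
            exact (((hμ j).fderiv_right (m := ∞) (by simp)).contDiffOn).clm_apply hY.contDiffOn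
          · simp only [if_neg hm]; exact contDiffOn_const
        · by_cases hm : m ≤ n
          · simp only [if_pos hm]
            exact ((hc m).fderiv_of_isOpen hUopen (by simp)).clm_apply hXbS.contDiffOn
          · simp only [if_neg hm]; exact contDiffOn_const
        · by_cases hm : 1 ≤ m
          · simp only [if_pos hm]
            exact (hhS.contDiffOn).mul (hc (m - 1))
          · simp only [if_neg hm]; exact contDiffOn_const
      · intro p hp
        have hcj : ∀ j, DifferentiableAt ℝ (c j) p := fun j =>
          ((hc j).differentiableOn (by simp)).differentiableAt (hUopen.mem_nhds hp)
        have hμj : ∀ j, DifferentiableAt ℝ (μ j) p := fun j =>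
          ((hμ j).differentiable (by simp)).differentiableAt
        set A : ℕ → ℝ := fun j => fderiv ℝ (μ j) p (Y p) with hAdef
        set B : ℕ → ℝ := fun j => fderiv ℝ (c j) p (Xb p) with hBdef
        have hstep0 : dirDerivIter Xb (n + 1) lam p
            = fderiv ℝ (dirDerivIter Xb n lam) p (Xb p) := rfl
        have hfeq : fderiv ℝ (dirDerivIter Xb n lam) p
            = fderiv ℝ (fun q => ∑ j ∈ Finset.range (n + 1), c j q * μ j q) p := by
          apply Filter.EventuallyEq.fderiv_eq
          filter_upwards [hUopen.mem_nhds hp] with q hq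
          exact hrep q hq
        have hsum : fderiv ℝ (fun q => ∑ j ∈ Finset.range (n + 1), c j q * μ j q) p
            = ∑ j ∈ Finset.range (n + 1), (c j p • fderiv ℝ (μ j) p + μ j p • fderiv ℝ (c j) p) := by
          rw [fderiv_fun_sum (A := fun j q => c j q * μ j q) (fun j _ => ((hcj j).mul (hμj j)))]
          exact Finset.sum_congr rfl fun j _ => fderiv_fun_mul (hcj j) (hμj j)
        have hμsucc : ∀ j, fderiv ℝ (μ j) p (Xt p) = μ (j + 1) p := fun j => rfl
        have hXbval : ∀ j, fderiv ℝ (μ j) p (Xb p)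
            = h p * μ (j + 1) p + lam p * A j := by
          intro j
          rw [hXbY p hp, map_add, _root_.map_smul, _root_.map_smul, smul_eq_mul, smul_eq_mul, hμsucc j, hAdef]
        have expand : dirDerivIter Xb (n + 1) lam p
            = ∑ j ∈ Finset.range (n + 1),
              (c j p * (h p * μ (j + 1) p + lam p * A j) + μ j p * B j) := by
          rw [hstep0, hfeq, hsum, ContinuousLinearMap.sum_apply]
          refine Finset.sum_congr rfl fun j _ => ?_
          rw [ContinuousLinearMap.add_apply, ContinuousLinearMap.smul_apply,
            ContinuousLinearMap.smul_apply, smul_eq_mul, smul_eq_mul, hXbval j, hBdef]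
        set SA : ℝ := ∑ j ∈ Finset.range (n + 1), c j p * A j with hSAdef
        have hT1 : ∑ m ∈ Finset.range (n + 2), (if m = 0 then SA else 0) * μ m p
            = SA * lam p := by
          rw [Finset.sum_eq_single 0]
          · simp only [if_pos rfl]
            rfl
          · intro m _ hm
            simp [hm]
          · intro habs
            exact absurd (Finset.mem_range.2 (by omega)) habs
        have hT2 : ∑ m ∈ Finset.range (n + 2), (if m ≤ n then B m else 0) * μ m p
            = ∑ m ∈ Finset.range (n + 1), B m * μ m p := by
          rw [Finset.sum_range_succ, if_neg (by omega : ¬ n + 1 ≤ n), zero_mul, add_zero]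
          refine Finset.sum_congr rfl fun m hm => ?_
          rw [if_pos (Nat.lt_succ_iff.mp (Finset.mem_range.mp hm))]
        have hT3 : ∑ m ∈ Finset.range (n + 2), (if 1 ≤ m then h p * c (m - 1) p else 0) * μ m p
            = ∑ j ∈ Finset.range (n + 1), h p * c j p * μ (j + 1) p := by
          rw [Finset.sum_range_succ']
          rw [if_neg (by omega : ¬ (1:ℕ) ≤ 0), zero_mul, add_zero]
          refine Finset.sum_congr rfl fun j _ => ?_
          rw [if_pos (by omega : 1 ≤ j + 1), Nat.add_sub_cancel]
        have hc'mul : ∀ m, c' m p * μ m p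
            = (if m = 0 then SA else 0) * μ m p + (if m ≤ n then B m else 0) * μ m p
              + (if 1 ≤ m then h p * c (m - 1) p else 0) * μ m p := by
          intro m
          rw [hc'def]
          ring
        rw [expand]
        calc ∑ j ∈ Finset.range (n + 1),
              (c j p * (h p * μ (j + 1) p + lam p * A j) + μ j p * B j)
            = (∑ j ∈ Finset.range (n + 1), h p * c j p * μ (j + 1) p)
              + ((∑ j ∈ Finset.range (n + 1), c j p * A j) * lam p
              + ∑ j ∈ Finset.range (n + 1), B j * μ j p) := by
              rw [Finset.sum_mul, ← Finset.sum_add_distrib, ← Finset.sum_add_distrib]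
              refine Finset.sum_congr rfl fun j _ => ?_
              ring
          _ = ∑ m ∈ Finset.range (n + 1 + 1), c' m p * μ m p := by
              rw [Finset.sum_congr rfl fun m _ => hc'mul m, Finset.sum_add_distrib,
                Finset.sum_add_distrib, hT1, hT2, hT3, ← hSAdef]
              ring
      · intro p hp
        rw [hc'def]
        simp only []
        rw [if_neg (by omega : ¬ n + 1 = 0), if_neg (by omega : ¬ n + 1 ≤ n),
          if_pos (by omega : 1 ≤ n + 1), Nat.add_sub_cancel, htop p hp]
        ring
  constructor
  · intro i hi1 hik
    obtain ⟨c, hc, hrep, htop⟩ := key i (le_of_lt hik)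
    rw [hrep (0, 0) hU0]
    apply Finset.sum_eq_zero
    intro j hj
    rw [Finset.mem_range] at hj
    rcases Nat.eq_zero_or_pos j with hj0 | hj1
    · subst hj0
      simp [dirDerivIter, hlam0, show lam 0 = 0 from hlam0]
    · rw [hvan j hj1 (by omega), mul_zero]
  · obtain ⟨c, hc, hrep, htop⟩ := key k le_rfl
    rw [hrep (0, 0) hU0, Finset.sum_range_succ]
    have hzero : ∑ j ∈ Finset.range k, c j (0, 0) * dirDerivIter Xt j lam (0, 0) = 0 := by
      apply Finset.sum_eq_zero
      intro j hj
      rw [Finset.mem_range] at hj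
      rcases Nat.eq_zero_or_pos j with hj0 | hj1
      · subst hj0
        simp [dirDerivIter, hlam0, show lam 0 = 0 from hlam0]
      · rw [hvan j hj1 hj, mul_zero]
    rw [hzero, zero_add, htop (0, 0) hU0]
    exact mul_ne_zero (pow_ne_zero k hh0) hnz
end

section
/- Let g,h : ℝ² → ℝ be smooth with (g_vvv(0,0), h_vvv(0,0)) ≠ (0,0), let f : ℝ² → ℝ³ be defined by f(u,v) = (u, (v²/2 − u)·g_vv(u,v) − v·g_v(u,v) + g(u,v), (v²/2 − u)·h_vv(u,v) − v·h_v(u,v) + h(u,v)), and define F : ℝ² → ℝ³ by F(x,y) = −f(x²/2 − y, x). Then there is a neighborhood U of the origin such that for all (x,y) ∈ U, the differential of F at (x,y) fails to be injective if and only if y = 0, and at each point (x,0) ∈ U the kernel of the differential of F is spanned by the vector (1, x). -/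
noncomputable def pd (G : ℝ × ℝ → ℝ) : ℝ × ℝ → ℝ := fun p => fderiv ℝ G p (0, 1)

lemma contDiff_pd {G : ℝ × ℝ → ℝ} (hG : ContDiff ℝ (⊤ : ℕ∞) G) : ContDiff ℝ (⊤ : ℕ∞) (pd G) :=
  (hG.fderiv_right (by simp)).clm_apply contDiff_const

lemma hasDerivAt_slice_s10 {G : ℝ × ℝ → ℝ} (hG : ContDiff ℝ (⊤ : ℕ∞) G) (u v : ℝ) :
    HasDerivAt (fun w => G (u, w)) (pd G (u, v)) v := by
  have h1 : HasDerivAt (fun w : ℝ => ((u, w) : ℝ × ℝ)) ((0 : ℝ), (1 : ℝ)) v :=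
    (hasDerivAt_const v u).prodMk (hasDerivAt_id v)
  exact (hG.differentiable (by simp) (u, v)).hasFDerivAt.comp_hasDerivAt v h1

lemma deriv_slice {G : ℝ × ℝ → ℝ} (hG : ContDiff ℝ (⊤ : ℕ∞) G) (u : ℝ) :
    deriv (fun w => G (u, w)) = fun v => pd G (u, v) := by
  funext v; exact (hasDerivAt_slice_s10 hG u v).deriv

noncomputable def Af (G : ℝ × ℝ → ℝ) : ℝ × ℝ → ℝ :=
  fun p => (p.2 ^ 2 / 2 - p.1) * pd (pd G) p - p.2 * pd G p + G p

lemma contDiff_Af {G : ℝ × ℝ → ℝ} (hG : ContDiff ℝ (⊤ : ℕ∞) G) : ContDiff ℝ (⊤ : ℕ∞) (Af G) := by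
  have h1 := contDiff_pd hG
  have h2 := contDiff_pd h1
  exact ((((contDiff_snd.pow 2).div_const 2).sub contDiff_fst).mul h2).sub
    (contDiff_snd.mul h1) |>.add hG

lemma pd_Af {G : ℝ × ℝ → ℝ} (hG : ContDiff ℝ (⊤ : ℕ∞) G) (u v : ℝ) :
    pd (Af G) (u, v) = (v ^ 2 / 2 - u) * pd (pd (pd G)) (u, v) := by
  have hG1 := contDiff_pd hG
  have hG2 := contDiff_pd hG1
  have h1 : HasDerivAt (fun w => Af G (u, w)) (pd (Af G) (u, v)) v :=
    hasDerivAt_slice_s10 (contDiff_Af hG) u v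
  have s0 := hasDerivAt_slice_s10 hG u v
  have s1 := hasDerivAt_slice_s10 hG1 u v
  have s2 := hasDerivAt_slice_s10 hG2 u v
  have hw : HasDerivAt (fun w : ℝ => w ^ 2 / 2 - u) v v := by
    have := ((hasDerivAt_pow 2 v).div_const 2).sub_const u
    exact this.congr_deriv (by simp)
  have h2 : HasDerivAt (fun w => (w ^ 2 / 2 - u) * pd (pd G) (u, w) - w * pd G (u, w) + G (u, w))
      ((v * pd (pd G) (u, v) + (v ^ 2 / 2 - u) * pd (pd (pd G)) (u, v))
        - (1 * pd G (u, v) + v * pd (pd G) (u, v)) + pd G (u, v)) v :=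
    ((hw.mul s2).sub ((hasDerivAt_id v).mul s1)).add s0
  have h3 := h1.unique h2
  rw [h3]; ring

lemma deriv1_slice {G : ℝ × ℝ → ℝ} (hG : ContDiff ℝ (⊤ : ℕ∞) G) (u v : ℝ) :
    deriv (fun w => G (u, w)) v = pd G (u, v) := (hasDerivAt_slice_s10 hG u v).deriv

lemma deriv2_slice {G : ℝ × ℝ → ℝ} (hG : ContDiff ℝ (⊤ : ℕ∞) G) (u v : ℝ) :
    deriv (deriv (fun w => G (u, w))) v = pd (pd G) (u, v) := by
  rw [deriv_slice hG u]
  exact (hasDerivAt_slice_s10 (contDiff_pd hG) u v).deriv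

lemma deriv3_slice {G : ℝ × ℝ → ℝ} (hG : ContDiff ℝ (⊤ : ℕ∞) G) (u v : ℝ) :
    deriv (deriv (deriv (fun w => G (u, w)))) v = pd (pd (pd G)) (u, v) := by
  rw [deriv_slice hG u, deriv_slice (contDiff_pd hG) u]
  exact (hasDerivAt_slice_s10 (contDiff_pd (contDiff_pd hG)) u v).deriv

theorem main_aux (G H : ℝ × ℝ → ℝ) (hG : ContDiff ℝ (⊤ : ℕ∞) G) (hH : ContDiff ℝ (⊤ : ℕ∞) H)
    (hne : ((pd (pd (pd G)) (0, 0) : ℝ), pd (pd (pd H)) (0, 0)) ≠ (0, 0))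
    (F : ℝ × ℝ → ℝ × ℝ × ℝ)
    (hF : F = fun p => -(p.1 ^ 2 / 2 - p.2, Af G (p.1 ^ 2 / 2 - p.2, p.1),
      Af H (p.1 ^ 2 / 2 - p.2, p.1))) :
    ∃ U ∈ nhds ((0 : ℝ), (0 : ℝ)), ∀ p ∈ U,
      (¬ Function.Injective (fderiv ℝ F p) ↔ p.2 = 0)
      ∧ (p.2 = 0 →
          LinearMap.ker (fderiv ℝ F p : ℝ × ℝ →ₗ[ℝ] ℝ × ℝ × ℝ) = Submodule.span ℝ {((1 : ℝ), p.1)}) := by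
  subst hF
  have hA : ContDiff ℝ (⊤ : ℕ∞) (Af G) := contDiff_Af hG
  have hB : ContDiff ℝ (⊤ : ℕ∞) (Af H) := contDiff_Af hH
  set G3 := pd (pd (pd G)) with hG3
  set H3 := pd (pd (pd H)) with hH3
  set φ : ℝ × ℝ → ℝ × ℝ := fun p => (p.1 ^ 2 / 2 - p.2, p.1) with hφdef
  set U : Set (ℝ × ℝ) := {p | (G3 (φ p), H3 (φ p)) ≠ ((0 : ℝ), (0 : ℝ))} with hUdef
  have hUopen : IsOpen U := by
    have hc : Continuous (fun p => (G3 (φ p), H3 (φ p))) := by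
      have h1 : Continuous G3 := (contDiff_pd (contDiff_pd (contDiff_pd hG))).continuous
      have h2 : Continuous H3 := (contDiff_pd (contDiff_pd (contDiff_pd hH))).continuous
      have h3 : Continuous φ := by fun_prop
      exact ((h1.comp h3).prodMk (h2.comp h3))
    exact isOpen_compl_singleton.preimage hc
  have h00 : ((0 : ℝ), (0 : ℝ)) ∈ U := by
    have hφ0 : φ ((0 : ℝ), (0 : ℝ)) = ((0 : ℝ), (0 : ℝ)) := by
      simp [hφdef]
    show (G3 (φ (0, 0)), H3 (φ (0, 0))) ≠ ((0 : ℝ), (0 : ℝ))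
    rw [hφ0]
    exact hne
  refine ⟨U, hUopen.mem_nhds h00, ?_⟩
  rintro ⟨x, y⟩ hp
  set q : ℝ × ℝ := (x ^ 2 / 2 - y, x) with hq
  have hpq : (G3 q, H3 q) ≠ ((0 : ℝ), (0 : ℝ)) := hp
  -- derivative of φ
  obtain ⟨Lφ, hLφ, hLφval⟩ : ∃ L : ℝ × ℝ →L[ℝ] ℝ × ℝ, HasFDerivAt φ L (x, y) ∧
      ∀ a b : ℝ, L (a, b) = (x * a - b, a) := by
    refine ⟨_, HasFDerivAt.congr_of_eventuallyEq
      ((((hasFDerivAt_fst.mul hasFDerivAt_fst).const_mul ((1 : ℝ)/2)).sub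
        hasFDerivAt_snd).prodMk hasFDerivAt_fst) ?_, ?_⟩
    · exact Filter.Eventually.of_forall fun p => by
        simp only [hφdef]
        rw [Prod.mk.injEq]
        exact ⟨by simp only [Pi.sub_apply, Pi.mul_apply]; ring, rfl⟩
    · intro a b
      simp [ContinuousLinearMap.prod_apply]
      ring
  -- derivative of the inner map f
  set LA : ℝ × ℝ →L[ℝ] ℝ := fderiv ℝ (Af G) q with hLA
  set LB : ℝ × ℝ →L[ℝ] ℝ := fderiv ℝ (Af H) q with hLB
  have hLf : HasFDerivAt (fun w : ℝ × ℝ => (w.1, Af G w, Af H w))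
      ((ContinuousLinearMap.fst ℝ ℝ ℝ).prod (LA.prod LB)) q :=
    hasFDerivAt_fst.prodMk (((hA.differentiable (by simp) q).hasFDerivAt).prodMk
      ((hB.differentiable (by simp) q).hasFDerivAt))
  have hFd : HasFDerivAt (fun p : ℝ × ℝ => -(p.1 ^ 2 / 2 - p.2,
      Af G (p.1 ^ 2 / 2 - p.2, p.1), Af H (p.1 ^ 2 / 2 - p.2, p.1)))
      (-(((ContinuousLinearMap.fst ℝ ℝ ℝ).prod (LA.prod LB)).comp Lφ)) (x, y) :=
    (hLf.comp (x, y) hLφ).neg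
  have hfd := hFd.fderiv
  -- values of LA, LB on the vector (0, 1)
  have hLA01 : LA (0, 1) = y * G3 q := by
    have h1 := pd_Af hG (x ^ 2 / 2 - y) x
    have hyy : x ^ 2 / 2 - (x ^ 2 / 2 - y) = y := by ring
    rw [hyy] at h1
    exact h1
  have hLB01 : LB (0, 1) = y * H3 q := by
    have h1 := pd_Af hH (x ^ 2 / 2 - y) x
    have hyy : x ^ 2 / 2 - (x ^ 2 / 2 - y) = y := by ring
    rw [hyy] at h1
    exact h1
  -- kernel characterization
  have hker : ∀ z : ℝ × ℝ, fderiv ℝ (fun p : ℝ × ℝ => -(p.1 ^ 2 / 2 - p.2,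
      Af G (p.1 ^ 2 / 2 - p.2, p.1), Af H (p.1 ^ 2 / 2 - p.2, p.1))) (x, y) z = 0 ↔
      (z.2 = x * z.1 ∧ z.1 * y = 0) := by
    intro z
    rw [hfd]
    have hz : Lφ z = (x * z.1 - z.2, z.1) := hLφval z.1 z.2
    have heval : (-(((ContinuousLinearMap.fst ℝ ℝ ℝ).prod (LA.prod LB)).comp Lφ)) z
        = -(x * z.1 - z.2, LA (x * z.1 - z.2, z.1), LB (x * z.1 - z.2, z.1)) := by
      simp [ContinuousLinearMap.comp_apply, hz]
    rw [heval, neg_eq_zero]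
    rw [Prod.ext_iff, Prod.ext_iff]
    simp only [Prod.fst_zero, Prod.snd_zero]
    constructor
    · rintro ⟨h1, h2, h3⟩
      have hz2 : z.2 = x * z.1 := by linarith
      refine ⟨hz2, ?_⟩
      have he : ((x * z.1 - z.2, z.1) : ℝ × ℝ) = z.1 • ((0 : ℝ), (1 : ℝ)) := by
        rw [Prod.mk.injEq]
        constructor
        · rw [hz2]; simp
        · simp
      rw [he, map_smul, hLA01, smul_eq_mul] at h2
      rw [he, map_smul, hLB01, smul_eq_mul] at h3
      by_contra hzy
      have h2' : z.1 * y * G3 q = 0 := by rw [mul_assoc]; exact h2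
      have h3' : z.1 * y * H3 q = 0 := by rw [mul_assoc]; exact h3
      have hG0 : G3 q = 0 := by
        rcases mul_eq_zero.mp h2' with hh | hh
        · exact absurd hh hzy
        · exact hh
      have hH0 : H3 q = 0 := by
        rcases mul_eq_zero.mp h3' with hh | hh
        · exact absurd hh hzy
        · exact hh
      exact hpq (by rw [hG0, hH0])
    · rintro ⟨h1, h2⟩
      have h0 : x * z.1 - z.2 = 0 := by rw [h1]; ring
      have he : ((x * z.1 - z.2, z.1) : ℝ × ℝ) = z.1 • ((0 : ℝ), (1 : ℝ)) := by
        rw [Prod.mk.injEq]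
        exact ⟨by rw [h0]; simp, by simp⟩
      refine ⟨h0, ?_, ?_⟩
      · rw [he, map_smul, hLA01, smul_eq_mul, ← mul_assoc, h2, zero_mul]
      · rw [he, map_smul, hLB01, smul_eq_mul, ← mul_assoc, h2, zero_mul]
  -- conclusions
  constructor
  · constructor
    · intro hni
      by_contra hy
      apply hni
      intro z w hzw
      have hsub : fderiv ℝ (fun p : ℝ × ℝ => -(p.1 ^ 2 / 2 - p.2,
          Af G (p.1 ^ 2 / 2 - p.2, p.1), Af H (p.1 ^ 2 / 2 - p.2, p.1))) (x, y) (z - w) = 0 := by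
        rw [map_sub, hzw, sub_self]
      obtain ⟨k1, k2⟩ := (hker (z - w)).mp hsub
      have hz1 : (z - w).1 = 0 := by
        rcases mul_eq_zero.mp k2 with hh | hh
        · exact hh
        · exact absurd hh hy
      have hz2 : (z - w).2 = 0 := by rw [k1, hz1, mul_zero]
      have : z - w = 0 := Prod.ext hz1 hz2
      exact sub_eq_zero.mp this
    · intro hy hinj
      have h1 : fderiv ℝ (fun p : ℝ × ℝ => -(p.1 ^ 2 / 2 - p.2,
          Af G (p.1 ^ 2 / 2 - p.2, p.1), Af H (p.1 ^ 2 / 2 - p.2, p.1))) (x, y)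
          ((1 : ℝ), x) = 0 := by
        refine (hker (1, x)).mpr ⟨?_, ?_⟩
        · simp
        · show (1 : ℝ) * y = 0
          rw [show y = (0:ℝ) from hy, mul_zero]
      have h0 := map_zero (fderiv ℝ (fun p : ℝ × ℝ => -(p.1 ^ 2 / 2 - p.2,
          Af G (p.1 ^ 2 / 2 - p.2, p.1), Af H (p.1 ^ 2 / 2 - p.2, p.1))) (x, y))
      have heq : ((1 : ℝ), x) = (0 : ℝ × ℝ) := hinj (h1.trans h0.symm)
      exact one_ne_zero (congrArg Prod.fst heq)
  · intro hy
    ext z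
    rw [LinearMap.mem_ker, Submodule.mem_span_singleton]
    rw [ContinuousLinearMap.coe_coe, hker z]
    constructor
    · rintro ⟨h1, _⟩
      refine ⟨z.1, ?_⟩
      rw [Prod.smul_mk, smul_eq_mul, smul_eq_mul, mul_one]
      rw [Prod.ext_iff]
      exact ⟨rfl, by rw [h1]; ring⟩
    · rintro ⟨a, rfl⟩
      rw [Prod.smul_mk, smul_eq_mul, smul_eq_mul, mul_one]
      exact ⟨by ring, by rw [show y = (0:ℝ) from hy, mul_zero]⟩

/-- The modified normal form `F(x,y) = −f(x²/2 − y, x)` of a singular point of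
the second kind: near the origin its differential fails to be injective exactly
on the `x`-axis, and at `(x,0)` the kernel of the differential is spanned by
`(1, x)`. -/
theorem stmt_10 (g h : ℝ → ℝ → ℝ)
    (hg : ContDiff ℝ (⊤ : ℕ∞) (fun p : ℝ × ℝ => g p.1 p.2))
    (hh : ContDiff ℝ (⊤ : ℕ∞) (fun p : ℝ × ℝ => h p.1 p.2))
    (hne : (deriv (deriv (deriv (g 0))) 0, deriv (deriv (deriv (h 0))) 0) ≠ (0, 0))
    (f : ℝ × ℝ → ℝ × ℝ × ℝ)
    (hf : ∀ u v : ℝ, f (u, v) =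
      (u, (v ^ 2 / 2 - u) * deriv (deriv (g u)) v - v * deriv (g u) v + g u v,
          (v ^ 2 / 2 - u) * deriv (deriv (h u)) v - v * deriv (h u) v + h u v))
    (F : ℝ × ℝ → ℝ × ℝ × ℝ)
    (hF : ∀ x y : ℝ, F (x, y) = -f (x ^ 2 / 2 - y, x)) :
    ∃ U ∈ nhds ((0 : ℝ), (0 : ℝ)), ∀ p ∈ U,
      (¬ Function.Injective (fderiv ℝ F p) ↔ p.2 = 0)
      ∧ (p.2 = 0 →
          LinearMap.ker (fderiv ℝ F p : ℝ × ℝ →ₗ[ℝ] ℝ × ℝ × ℝ) = Submodule.span ℝ {((1 : ℝ), p.1)}) := by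
  set G : ℝ × ℝ → ℝ := fun p => g p.1 p.2 with hGdef
  set H : ℝ × ℝ → ℝ := fun p => h p.1 p.2 with hHdef
  have e1 : deriv (deriv (deriv (g 0))) 0 = pd (pd (pd G)) (0, 0) := deriv3_slice hg 0 0
  have e2 : deriv (deriv (deriv (h 0))) 0 = pd (pd (pd H)) (0, 0) := deriv3_slice hh 0 0
  have hne' : ((pd (pd (pd G)) (0, 0) : ℝ), pd (pd (pd H)) (0, 0)) ≠ (0, 0) := by
    rw [← e1, ← e2]; exact hne
  have hF' : F = fun p : ℝ × ℝ => -(p.1 ^ 2 / 2 - p.2,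
      Af G (p.1 ^ 2 / 2 - p.2, p.1), Af H (p.1 ^ 2 / 2 - p.2, p.1)) := by
    funext p
    obtain ⟨xx, yy⟩ := p
    rw [hF xx yy, hf]
    set u : ℝ := xx ^ 2 / 2 - yy
    have dg1 : deriv (g u) xx = pd G (u, xx) := deriv1_slice hg u xx
    have dg2 : deriv (deriv (g u)) xx = pd (pd G) (u, xx) := deriv2_slice hg u xx
    have dh1 : deriv (h u) xx = pd H (u, xx) := deriv1_slice hh u xx
    have dh2 : deriv (deriv (h u)) xx = pd (pd H) (u, xx) := deriv2_slice hh u xx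
    rw [dg1, dg2, dh1, dh2]
    rfl
  exact main_aux G H hg hh hne' F hF'
end

section
/- Let F : ℝ² → ℝ³ and ν₂ : ℝ² → ℝ³ be smooth maps with ⟨F_u(u,v), ν₂(u,v)⟩ = 0 and ⟨F_v(u,v), ν₂(u,v)⟩ = 0 for all (u,v), and let φ : ℝ² → ℝ³ be a smooth map with F_u(u,v) + u·F_v(u,v) = v·φ(u,v) for all (u,v). Define L̃₂ = −⟨φ, (ν₂)_u⟩, M̃₂ = −⟨φ, (ν₂)_v⟩, Ñ₂ = −⟨F_v, (ν₂)_v⟩, and L₂ = ⟨F_uu, ν₂⟩, M₂ = ⟨F_uv, ν₂⟩, N₂ = ⟨F_vv, ν₂⟩. Then for all (u,v): L₂ = v·L̃₂ + u²·Ñ₂ − uv·M̃₂, M₂ = −u·Ñ₂ + v·M̃₂, and N₂ = Ñ₂. -/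
section helpers

variable {X : Type*} [NormedAddCommGroup X] [NormedSpace ℝ X]

theorem pd_u {h : ℝ × ℝ → X} (hh : ContDiff ℝ (⊤ : ℕ∞) h) (u v : ℝ) :
    HasDerivAt (fun t => h (t, v)) (fderiv ℝ h (u, v) (1, 0)) u := by
  have hc : HasDerivAt (fun t : ℝ => ((t, v) : ℝ × ℝ)) (1, 0) u :=
    (hasDerivAt_id u).prodMk (hasDerivAt_const u v)
  exact ((hh.differentiable (by simp) (u, v)).hasFDerivAt).comp_hasDerivAt u hc

theorem pd_v {h : ℝ × ℝ → X} (hh : ContDiff ℝ (⊤ : ℕ∞) h) (u v : ℝ) :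
    HasDerivAt (fun w => h (u, w)) (fderiv ℝ h (u, v) (0, 1)) v := by
  have hc : HasDerivAt (fun w : ℝ => ((u, w) : ℝ × ℝ)) (0, 1) v :=
    (hasDerivAt_const v u).prodMk (hasDerivAt_id v)
  exact ((hh.differentiable (by simp) (u, v)).hasFDerivAt).comp_hasDerivAt v hc

theorem HasDerivAt.dot3 {f g : ℝ → ℝ × ℝ × ℝ} {f' g' : ℝ × ℝ × ℝ} {x : ℝ}
    (hf : HasDerivAt f f' x) (hg : HasDerivAt g g' x) :
    HasDerivAt (fun t => dot3 (f t) (g t)) (dot3 f' (g x) + dot3 (f x) g') x := by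
  have h1 : HasDerivAt (fun t => (f t).1) f'.1 x :=
    (ContinuousLinearMap.fst ℝ ℝ (ℝ × ℝ)).hasFDerivAt.comp_hasDerivAt x hf
  have h2 : HasDerivAt (fun t => (f t).2) f'.2 x :=
    (ContinuousLinearMap.snd ℝ ℝ (ℝ × ℝ)).hasFDerivAt.comp_hasDerivAt x hf
  have h21 : HasDerivAt (fun t => (f t).2.1) f'.2.1 x :=
    (ContinuousLinearMap.fst ℝ ℝ ℝ).hasFDerivAt.comp_hasDerivAt x h2
  have h22 : HasDerivAt (fun t => (f t).2.2) f'.2.2 x :=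
    (ContinuousLinearMap.snd ℝ ℝ ℝ).hasFDerivAt.comp_hasDerivAt x h2
  have k1 : HasDerivAt (fun t => (g t).1) g'.1 x :=
    (ContinuousLinearMap.fst ℝ ℝ (ℝ × ℝ)).hasFDerivAt.comp_hasDerivAt x hg
  have k2 : HasDerivAt (fun t => (g t).2) g'.2 x :=
    (ContinuousLinearMap.snd ℝ ℝ (ℝ × ℝ)).hasFDerivAt.comp_hasDerivAt x hg
  have k21 : HasDerivAt (fun t => (g t).2.1) g'.2.1 x :=
    (ContinuousLinearMap.fst ℝ ℝ ℝ).hasFDerivAt.comp_hasDerivAt x k2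
  have k22 : HasDerivAt (fun t => (g t).2.2) g'.2.2 x :=
    (ContinuousLinearMap.snd ℝ ℝ ℝ).hasFDerivAt.comp_hasDerivAt x k2
  have := ((h1.mul k1).add (h21.mul k21)).add (h22.mul k22)
  convert this using 1
  · rfl
  · rfl
  · rfl
  simp only [_root_.dot3]; ring

theorem dot3_smul_sub (a b : ℝ) (x y w : ℝ × ℝ × ℝ) :
    dot3 (a • x - b • y) w = a * dot3 x w - b * dot3 y w := by
  simp only [dot3, Prod.fst_sub, Prod.snd_sub, Prod.smul_fst, Prod.smul_snd, smul_eq_mul]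
  ring

end helpers

/-- Coefficients of the asymptotic-curve BDE near a singular point of the
second kind in the normal form of Section 3.2: with `F_u + uF_v = vφ` and `ν₂`
a normal vector field, `L₂ = vL̃₂ + u²Ñ₂ − uvM̃₂`, `M₂ = −uÑ₂ + vM̃₂`,
`N₂ = Ñ₂`. -/
theorem stmt_11 (F ν₂ φ : ℝ → ℝ → ℝ × ℝ × ℝ)
    (hF : ContDiff ℝ (⊤ : ℕ∞) (fun p : ℝ × ℝ => F p.1 p.2))
    (hν : ContDiff ℝ (⊤ : ℕ∞) (fun p : ℝ × ℝ => ν₂ p.1 p.2))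
    (hφ : ContDiff ℝ (⊤ : ℕ∞) (fun p : ℝ × ℝ => φ p.1 p.2))
    (Fu Fv Fuu Fuv Fvv νu νv : ℝ → ℝ → ℝ × ℝ × ℝ)
    (hFu : ∀ u v : ℝ, Fu u v = deriv (fun t => F t v) u)
    (hFv : ∀ u v : ℝ, Fv u v = deriv (fun w => F u w) v)
    (hFuu : ∀ u v : ℝ, Fuu u v = deriv (fun t => Fu t v) u)
    (hFuv : ∀ u v : ℝ, Fuv u v = deriv (fun w => Fu u w) v)
    (hFvv : ∀ u v : ℝ, Fvv u v = deriv (fun w => Fv u w) v)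
    (hνu : ∀ u v : ℝ, νu u v = deriv (fun t => ν₂ t v) u)
    (hνv : ∀ u v : ℝ, νv u v = deriv (fun w => ν₂ u w) v)
    (horth1 : ∀ u v : ℝ, dot3 (Fu u v) (ν₂ u v) = 0)
    (horth2 : ∀ u v : ℝ, dot3 (Fv u v) (ν₂ u v) = 0)
    (hnull : ∀ u v : ℝ, Fu u v + u • Fv u v = v • φ u v)
    (Lt Mt Nt L2 M2 N2 : ℝ → ℝ → ℝ)
    (hLt : ∀ u v : ℝ, Lt u v = -dot3 (φ u v) (νu u v))
    (hMt : ∀ u v : ℝ, Mt u v = -dot3 (φ u v) (νv u v))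
    (hNt : ∀ u v : ℝ, Nt u v = -dot3 (Fv u v) (νv u v))
    (hL2 : ∀ u v : ℝ, L2 u v = dot3 (Fuu u v) (ν₂ u v))
    (hM2 : ∀ u v : ℝ, M2 u v = dot3 (Fuv u v) (ν₂ u v))
    (hN2 : ∀ u v : ℝ, N2 u v = dot3 (Fvv u v) (ν₂ u v)) :
    ∀ u v : ℝ,
      L2 u v = v * Lt u v + u ^ 2 * Nt u v - u * v * Mt u v
      ∧ M2 u v = -(u * Nt u v) + v * Mt u v
      ∧ N2 u v = Nt u v := by
  intro u v
  set Gf : ℝ × ℝ → ℝ × ℝ × ℝ := fun p : ℝ × ℝ => F p.1 p.2 with hGf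
  have hDG : ContDiff ℝ (⊤ : ℕ∞) (fderiv ℝ Gf) := hF.fderiv_right (by simp)
  -- first partials
  have hFu' : ∀ a b : ℝ, Fu a b = fderiv ℝ Gf (a, b) (1, 0) := fun a b => by
    rw [hFu a b]; exact (pd_u hF a b).deriv
  have hFv' : ∀ a b : ℝ, Fv a b = fderiv ℝ Gf (a, b) (0, 1) := fun a b => by
    rw [hFv a b]; exact (pd_v hF a b).deriv
  -- second partials as HasDerivAt
  have ev : ∀ w : ℝ × ℝ, HasDerivAt (fun t => fderiv ℝ Gf (t, v) w)
      ((fderiv ℝ (fderiv ℝ Gf) (u, v) (1, 0)) w) u := fun w =>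
    (ContinuousLinearMap.apply ℝ (ℝ × ℝ × ℝ) w).hasFDerivAt.comp_hasDerivAt u (pd_u hDG u v)
  have ev_v : ∀ w : ℝ × ℝ, HasDerivAt (fun s => fderiv ℝ Gf (u, s) w)
      ((fderiv ℝ (fderiv ℝ Gf) (u, v) (0, 1)) w) v := fun w =>
    (ContinuousLinearMap.apply ℝ (ℝ × ℝ × ℝ) w).hasFDerivAt.comp_hasDerivAt v (pd_v hDG u v)
  -- Clairaut
  have hswap : fderiv ℝ (fderiv ℝ Gf) (u, v) (1, 0) (0, 1)
      = fderiv ℝ (fderiv ℝ Gf) (u, v) (0, 1) (1, 0) :=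
    second_derivative_symmetric (fun y => (hF.differentiable (by simp) y).hasFDerivAt)
      ((hDG.differentiable (by simp) (u, v)).hasFDerivAt) _ _
  -- ν partials
  have hνu' : HasDerivAt (fun t => ν₂ t v) (νu u v) u := by
    have h := pd_u hν u v
    have he : νu u v = fderiv ℝ (fun p : ℝ × ℝ => ν₂ p.1 p.2) (u, v) (1, 0) := by
      rw [hνu u v]; exact h.deriv
    rw [he]; exact h
  have hνv' : HasDerivAt (fun w => ν₂ u w) (νv u v) v := by
    have h := pd_v hν u v
    have he : νv u v = fderiv ℝ (fun p : ℝ × ℝ => ν₂ p.1 p.2) (u, v) (0, 1) := by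
      rw [hνv u v]; exact h.deriv
    rw [he]; exact h
  -- second partial identifications
  have hFuu' : Fuu u v = fderiv ℝ (fderiv ℝ Gf) (u, v) (1, 0) (1, 0) := by
    rw [hFuu u v]
    have : (fun t => Fu t v) = fun t => fderiv ℝ Gf (t, v) (1, 0) := funext fun t => hFu' t v
    rw [this]; exact (ev (1, 0)).deriv
  have hFuv' : Fuv u v = fderiv ℝ (fderiv ℝ Gf) (u, v) (0, 1) (1, 0) := by
    rw [hFuv u v]
    have : (fun w => Fu u w) = fun w => fderiv ℝ Gf (u, w) (1, 0) := funext fun w => hFu' u w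
    rw [this]; exact (ev_v (1, 0)).deriv
  have hFvv' : Fvv u v = fderiv ℝ (fderiv ℝ Gf) (u, v) (0, 1) (0, 1) := by
    rw [hFvv u v]
    have : (fun w => Fv u w) = fun w => fderiv ℝ Gf (u, w) (0, 1) := funext fun w => hFv' u w
    rw [this]; exact (ev_v (0, 1)).deriv
  -- differentiated orthogonality relations
  have eq6 : dot3 (fderiv ℝ (fderiv ℝ Gf) (u, v) (1, 0) (1, 0)) (ν₂ u v)
      + dot3 (fderiv ℝ Gf (u, v) (1, 0)) (νu u v) = 0 := by
    have h := (ev (1, 0)).dot3 hνu'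
    have h0 : HasDerivAt (fun t => dot3 (fderiv ℝ Gf (t, v) (1, 0)) (ν₂ t v)) 0 u := by
      have hz : (fun t => dot3 (fderiv ℝ Gf (t, v) (1, 0)) (ν₂ t v)) = fun _ => 0 :=
        funext fun t => by rw [← hFu' t v]; exact horth1 t v
      rw [hz]; exact hasDerivAt_const u 0
    exact h.unique h0
  have eq3 : dot3 (fderiv ℝ (fderiv ℝ Gf) (u, v) (1, 0) (0, 1)) (ν₂ u v)
      + dot3 (fderiv ℝ Gf (u, v) (0, 1)) (νu u v) = 0 := by
    have h := (ev (0, 1)).dot3 hνu'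
    have h0 : HasDerivAt (fun t => dot3 (fderiv ℝ Gf (t, v) (0, 1)) (ν₂ t v)) 0 u := by
      have hz : (fun t => dot3 (fderiv ℝ Gf (t, v) (0, 1)) (ν₂ t v)) = fun _ => 0 :=
        funext fun t => by rw [← hFv' t v]; exact horth2 t v
      rw [hz]; exact hasDerivAt_const u 0
    exact h.unique h0
  have eq5 : dot3 (fderiv ℝ (fderiv ℝ Gf) (u, v) (0, 1) (1, 0)) (ν₂ u v)
      + dot3 (fderiv ℝ Gf (u, v) (1, 0)) (νv u v) = 0 := by
    have h := (ev_v (1, 0)).dot3 hνv'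
    have h0 : HasDerivAt (fun s => dot3 (fderiv ℝ Gf (u, s) (1, 0)) (ν₂ u s)) 0 v := by
      have hz : (fun s => dot3 (fderiv ℝ Gf (u, s) (1, 0)) (ν₂ u s)) = fun _ => 0 :=
        funext fun s => by rw [← hFu' u s]; exact horth1 u s
      rw [hz]; exact hasDerivAt_const v 0
    exact h.unique h0
  have eq4 : dot3 (fderiv ℝ (fderiv ℝ Gf) (u, v) (0, 1) (0, 1)) (ν₂ u v)
      + dot3 (fderiv ℝ Gf (u, v) (0, 1)) (νv u v) = 0 := by
    have h := (ev_v (0, 1)).dot3 hνv'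
    have h0 : HasDerivAt (fun s => dot3 (fderiv ℝ Gf (u, s) (0, 1)) (ν₂ u s)) 0 v := by
      have hz : (fun s => dot3 (fderiv ℝ Gf (u, s) (0, 1)) (ν₂ u s)) = fun _ => 0 :=
        funext fun s => by rw [← hFv' u s]; exact horth2 u s
      rw [hz]; exact hasDerivAt_const v 0
    exact h.unique h0
  rw [← hFu' u v] at eq6 eq5
  rw [← hFv' u v] at eq3 eq4
  -- the null relation
  have hFu_eq : Fu u v = v • φ u v - u • Fv u v := eq_sub_of_add_eq (hnull u v)
  have hfu_u : dot3 (Fu u v) (νu u v)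
      = v * dot3 (φ u v) (νu u v) - u * dot3 (Fv u v) (νu u v) := by
    rw [hFu_eq]; exact dot3_smul_sub v u _ _ _
  have hfu_v : dot3 (Fu u v) (νv u v)
      = v * dot3 (φ u v) (νv u v) - u * dot3 (Fv u v) (νv u v) := by
    rw [hFu_eq]; exact dot3_smul_sub v u _ _ _
  -- conclusions
  have hN : N2 u v = Nt u v := by
    rw [hN2 u v, hFvv']
    linear_combination eq4 - hNt u v
  have hM : M2 u v = -(u * Nt u v) + v * Mt u v := by
    rw [hM2 u v, hFuv']
    linear_combination eq5 - hfu_v + u * hNt u v - v * hMt u v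
  have mval : dot3 (fderiv ℝ (fderiv ℝ Gf) (u, v) (0, 1) (1, 0)) (ν₂ u v)
      = -(u * Nt u v) + v * Mt u v := by rw [← hFuv', ← hM2 u v]; exact hM
  have hL : L2 u v = v * Lt u v + u ^ 2 * Nt u v - u * v * Mt u v := by
    rw [hL2 u v, hFuu']
    rw [hswap] at eq3
    linear_combination eq6 - hfu_u + u * eq3 - u * mval - v * hLt u v
  exact ⟨hL, hM, hN⟩
end

section
/- Let F : ℝ² → ℝ³ and ν₂ : ℝ² → ℝ³ be smooth maps with ⟨F_u, ν₂⟩ = 0 and ⟨F_v, ν₂⟩ = 0 everywhere, and let φ : ℝ² → ℝ³ be smooth with F_u(u,v) + u·F_v(u,v) = v·φ(u,v) for all (u,v). Define Ẽ = ⟨φ,φ⟩, F̃ = ⟨φ, F_v⟩, G̃ = ⟨F_v, F_v⟩, L̃₂ = −⟨φ, (ν₂)_u⟩, M̃₂ = −⟨φ, (ν₂)_v⟩, Ñ₂ = −⟨F_v, (ν₂)_v⟩, and E = ⟨F_u,F_u⟩, F = ⟨F_u,F_v⟩, G = ⟨F_v,F_v⟩, L₂ = ⟨F_uu,ν₂⟩,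 M₂ = ⟨F_uv,ν₂⟩, N₂ = ⟨F_vv,ν₂⟩. Then for all (u,v): F·N₂ − G·M₂ = v·(F̃·Ñ₂ − G̃·M̃₂); E·N₂ − G·L₂ = v·(−G̃·L̃₂ + (G̃·M̃₂ − 2F̃·Ñ₂)·u + Ẽ·Ñ₂·v); and E·M₂ − F·L₂ = v·(G̃·L̃₂·u − F̃·L̃₂·v + F̃·Ñ₂·u² − (F̃·M̃₂ + Ẽ·Ñ₂)·uv + Ẽ·M̃₂·v²). -/
section helpers

variable {V : Type*} [NormedAddCommGroup V] [NormedSpace ℝ V]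

lemma slice1 {f : ℝ × ℝ → V} (hf : Differentiable ℝ f) (u v : ℝ) :
    HasDerivAt (fun t => f (t, v)) (fderiv ℝ f (u, v) (1, 0)) u :=
  (hf (u, v)).hasFDerivAt.comp_hasDerivAt u (HasDerivAt.prodMk (hasDerivAt_id u) (hasDerivAt_const u v))

lemma slice2 {f : ℝ × ℝ → V} (hf : Differentiable ℝ f) (u v : ℝ) :
    HasDerivAt (fun w => f (u, w)) (fderiv ℝ f (u, v) (0, 1)) v :=
  (hf (u, v)).hasFDerivAt.comp_hasDerivAt v (HasDerivAt.prodMk (hasDerivAt_const v u) (hasDerivAt_id v))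

lemma appD {c : ℝ → (ℝ × ℝ) →L[ℝ] ℝ × ℝ × ℝ} {c' : (ℝ × ℝ) →L[ℝ] ℝ × ℝ × ℝ} {x : ℝ}
    (e : ℝ × ℝ) (hc : HasDerivAt c c' x) : HasDerivAt (fun t => c t e) (c' e) x := by
  simpa using hc.clm_apply (hasDerivAt_const x e)

lemma hasDerivAt_dot3 {a b : ℝ → ℝ × ℝ × ℝ} {a' b' : ℝ × ℝ × ℝ} {x : ℝ}
    (ha : HasDerivAt a a' x) (hb : HasDerivAt b b' x) :
    HasDerivAt (fun t => dot3 (a t) (b t)) (dot3 a' (b x) + dot3 (a x) b') x := by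
  have c1 : ∀ {f : ℝ → ℝ × ℝ × ℝ} {f' : ℝ × ℝ × ℝ}, HasDerivAt f f' x →
      HasDerivAt (fun t => (f t).1) f'.1 x := fun hf =>
    (ContinuousLinearMap.fst ℝ ℝ (ℝ × ℝ)).hasFDerivAt.comp_hasDerivAt x hf
  have c2 : ∀ {f : ℝ → ℝ × ℝ × ℝ} {f' : ℝ × ℝ × ℝ}, HasDerivAt f f' x →
      HasDerivAt (fun t => (f t).2.1) f'.2.1 x := fun hf =>
    (ContinuousLinearMap.fst ℝ ℝ ℝ).hasFDerivAt.comp_hasDerivAt x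
      ((ContinuousLinearMap.snd ℝ ℝ (ℝ × ℝ)).hasFDerivAt.comp_hasDerivAt x hf)
  have c3 : ∀ {f : ℝ → ℝ × ℝ × ℝ} {f' : ℝ × ℝ × ℝ}, HasDerivAt f f' x →
      HasDerivAt (fun t => (f t).2.2) f'.2.2 x := fun hf =>
    (ContinuousLinearMap.snd ℝ ℝ ℝ).hasFDerivAt.comp_hasDerivAt x
      ((ContinuousLinearMap.snd ℝ ℝ (ℝ × ℝ)).hasFDerivAt.comp_hasDerivAt x hf)
  have h1 := (((c1 ha).mul (c1 hb)).add (((c2 ha).mul (c2 hb)).add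
    ((c3 ha).mul (c3 hb))))
  refine (h1.congr_of_eventuallyEq (Filter.Eventually.of_forall fun t => ?_)).congr_deriv ?_
  · simp only [dot3, Pi.add_apply, Pi.mul_apply]; ring
  · simp [dot3]; ring

lemma deriv_dot3_zero {a b : ℝ → ℝ × ℝ × ℝ} {a' b' : ℝ × ℝ × ℝ} {x : ℝ}
    (ha : HasDerivAt a a' x) (hb : HasDerivAt b b' x)
    (h : ∀ t, dot3 (a t) (b t) = 0) :
    dot3 a' (b x) + dot3 (a x) b' = 0 := by
  have hd := hasDerivAt_dot3 ha hb
  have h0 : (fun t => dot3 (a t) (b t)) = fun _ => (0 : ℝ) := funext h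
  rw [h0] at hd
  exact ((hasDerivAt_const x (0 : ℝ)).unique hd).symm

lemma dot3_smul_sub_left (c d : ℝ) (a b x : ℝ × ℝ × ℝ) :
    dot3 (c • a - d • b) x = c * dot3 a x - d * dot3 b x := by
  obtain ⟨a1, a2, a3⟩ := a; obtain ⟨b1, b2, b3⟩ := b; obtain ⟨x1, x2, x3⟩ := x
  simp [dot3, smul_eq_mul]
  ring

end helpers

lemma dot3_expand (c d : ℝ) (a b : ℝ × ℝ × ℝ) :
    dot3 (c • a - d • b) (c • a - d • b)
      = c ^ 2 * dot3 a a - 2 * c * d * dot3 a b + d ^ 2 * dot3 b b := by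
  obtain ⟨a1, a2, a3⟩ := a; obtain ⟨b1, b2, b3⟩ := b
  simp [dot3, smul_eq_mul]
  ring

/-- Each coefficient of the lines-of-curvature BDE
`ω_lc = (FN₂ − GM₂)du² + (EN₂ − GL₂)dudv + (EM₂ − FL₂)dv²` is divisible by `v`,
with the explicit quotients of the paper, near a singular point of the second
kind in the normal form of Section 3.2 (where `F_u + uF_v = vφ`). -/
theorem stmt_12 (F ν₂ φ : ℝ → ℝ → ℝ × ℝ × ℝ)
    (hF : ContDiff ℝ (⊤ : ℕ∞) (fun p : ℝ × ℝ => F p.1 p.2))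
    (hν : ContDiff ℝ (⊤ : ℕ∞) (fun p : ℝ × ℝ => ν₂ p.1 p.2))
    (hφ : ContDiff ℝ (⊤ : ℕ∞) (fun p : ℝ × ℝ => φ p.1 p.2))
    (Fu Fv Fuu Fuv Fvv νu νv : ℝ → ℝ → ℝ × ℝ × ℝ)
    (hFu : ∀ u v : ℝ, Fu u v = deriv (fun t => F t v) u)
    (hFv : ∀ u v : ℝ, Fv u v = deriv (fun w => F u w) v)
    (hFuu : ∀ u v : ℝ, Fuu u v = deriv (fun t => Fu t v) u)
    (hFuv : ∀ u v : ℝ, Fuv u v = deriv (fun w => Fu u w) v)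
    (hFvv : ∀ u v : ℝ, Fvv u v = deriv (fun w => Fv u w) v)
    (hνu : ∀ u v : ℝ, νu u v = deriv (fun t => ν₂ t v) u)
    (hνv : ∀ u v : ℝ, νv u v = deriv (fun w => ν₂ u w) v)
    (horth1 : ∀ u v : ℝ, dot3 (Fu u v) (ν₂ u v) = 0)
    (horth2 : ∀ u v : ℝ, dot3 (Fv u v) (ν₂ u v) = 0)
    (hnull : ∀ u v : ℝ, Fu u v + u • Fv u v = v • φ u v)
    (Et Ft Gt Lt Mt Nt Ee Ff Gg L2 M2 N2 : ℝ → ℝ → ℝ)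
    (hEt : ∀ u v : ℝ, Et u v = dot3 (φ u v) (φ u v))
    (hFt : ∀ u v : ℝ, Ft u v = dot3 (φ u v) (Fv u v))
    (hGt : ∀ u v : ℝ, Gt u v = dot3 (Fv u v) (Fv u v))
    (hLt : ∀ u v : ℝ, Lt u v = -dot3 (φ u v) (νu u v))
    (hMt : ∀ u v : ℝ, Mt u v = -dot3 (φ u v) (νv u v))
    (hNt : ∀ u v : ℝ, Nt u v = -dot3 (Fv u v) (νv u v))
    (hEe : ∀ u v : ℝ, Ee u v = dot3 (Fu u v) (Fu u v))
    (hFf : ∀ u v : ℝ, Ff u v = dot3 (Fu u v) (Fv u v))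
    (hGg : ∀ u v : ℝ, Gg u v = dot3 (Fv u v) (Fv u v))
    (hL2 : ∀ u v : ℝ, L2 u v = dot3 (Fuu u v) (ν₂ u v))
    (hM2 : ∀ u v : ℝ, M2 u v = dot3 (Fuv u v) (ν₂ u v))
    (hN2 : ∀ u v : ℝ, N2 u v = dot3 (Fvv u v) (ν₂ u v)) :
    ∀ u v : ℝ,
      Ff u v * N2 u v - Gg u v * M2 u v
          = v * (Ft u v * Nt u v - Gt u v * Mt u v)
      ∧ Ee u v * N2 u v - Gg u v * L2 u v
          = v * (-(Gt u v * Lt u v)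
              + (Gt u v * Mt u v - 2 * Ft u v * Nt u v) * u
              + Et u v * Nt u v * v)
      ∧ Ee u v * M2 u v - Ff u v * L2 u v
          = v * (Gt u v * Lt u v * u - Ft u v * Lt u v * v
              + Ft u v * Nt u v * u ^ 2
              - (Ft u v * Mt u v + Et u v * Nt u v) * u * v
              + Et u v * Mt u v * v ^ 2) := by
  intro u v
  have hFd : Differentiable ℝ (fun p : ℝ × ℝ => F p.1 p.2) := hF.differentiable (by simp)
  have hνd : Differentiable ℝ (fun p : ℝ × ℝ => ν₂ p.1 p.2) := hν.differentiable (by simp)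
  set DF := fderiv ℝ (fun p : ℝ × ℝ => F p.1 p.2) with hDFdef
  have hDFd : Differentiable ℝ DF := (hF.fderiv_right (m := 1) (WithTop.coe_le_coe.mpr le_top)).differentiable (by simp)
  -- first partial derivatives as fderiv evaluations
  have hFu' : ∀ a b : ℝ, Fu a b = DF (a, b) (1, 0) := fun a b =>
    (hFu a b).trans (slice1 hFd a b).deriv
  have hFv' : ∀ a b : ℝ, Fv a b = DF (a, b) (0, 1) := fun a b =>
    (hFv a b).trans (slice2 hFd a b).deriv
  -- derivative facts for ν₂
  have hνud : HasDerivAt (fun t => ν₂ t v) (νu u v) u := by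
    rw [show νu u v = fderiv ℝ (fun p : ℝ × ℝ => ν₂ p.1 p.2) (u, v) (1, 0) from
      (hνu u v).trans (slice1 hνd u v).deriv]
    exact slice1 hνd u v
  have hνvd : HasDerivAt (fun w => ν₂ u w) (νv u v) v := by
    rw [show νv u v = fderiv ℝ (fun p : ℝ × ℝ => ν₂ p.1 p.2) (u, v) (0, 1) from
      (hνv u v).trans (slice2 hνd u v).deriv]
    exact slice2 hνd u v
  -- second partial derivatives of F
  have hFu_u : HasDerivAt (fun t => Fu t v) (fderiv ℝ DF (u, v) (1, 0) (1, 0)) u := by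
    have e : (fun t => Fu t v) = fun t => DF (t, v) (1, 0) := funext fun t => hFu' t v
    rw [e]; exact appD (1, 0) (slice1 hDFd u v)
  have hFu_v : HasDerivAt (fun w => Fu u w) (fderiv ℝ DF (u, v) (0, 1) (1, 0)) v := by
    have e : (fun w => Fu u w) = fun w => DF (u, w) (1, 0) := funext fun w => hFu' u w
    rw [e]; exact appD (1, 0) (slice2 hDFd u v)
  have hFv_u : HasDerivAt (fun t => Fv t v) (fderiv ℝ DF (u, v) (1, 0) (0, 1)) u := by
    have e : (fun t => Fv t v) = fun t => DF (t, v) (0, 1) := funext fun t => hFv' t v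
    rw [e]; exact appD (0, 1) (slice1 hDFd u v)
  have hFv_v : HasDerivAt (fun w => Fv u w) (fderiv ℝ DF (u, v) (0, 1) (0, 1)) v := by
    have e : (fun w => Fv u w) = fun w => DF (u, w) (0, 1) := funext fun w => hFv' u w
    rw [e]; exact appD (0, 1) (slice2 hDFd u v)
  have hFuu' : Fuu u v = fderiv ℝ DF (u, v) (1, 0) (1, 0) := (hFuu u v).trans hFu_u.deriv
  have hFuv' : Fuv u v = fderiv ℝ DF (u, v) (0, 1) (1, 0) := (hFuv u v).trans hFu_v.deriv
  have hFvv' : Fvv u v = fderiv ℝ DF (u, v) (0, 1) (0, 1) := (hFvv u v).trans hFv_v.deriv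
  -- Clairaut
  have hsym : fderiv ℝ DF (u, v) (1, 0) (0, 1) = fderiv ℝ DF (u, v) (0, 1) (1, 0) :=
    second_derivative_symmetric (fun y => (hFd y).hasFDerivAt) (hDFd (u, v)).hasFDerivAt _ _
  have hFuuAt : HasDerivAt (fun t => Fu t v) (Fuu u v) u := by rw [hFuu']; exact hFu_u
  have hFuvAt : HasDerivAt (fun w => Fu u w) (Fuv u v) v := by rw [hFuv']; exact hFu_v
  have hFvvAt : HasDerivAt (fun w => Fv u w) (Fvv u v) v := by rw [hFvv']; exact hFv_v
  -- differentiate the orthogonality relations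
  have eq1 : dot3 (Fvv u v) (ν₂ u v) + dot3 (Fv u v) (νv u v) = 0 :=
    deriv_dot3_zero hFvvAt hνvd (horth2 u)
  have eq2 : dot3 (Fuv u v) (ν₂ u v) + dot3 (Fu u v) (νv u v) = 0 :=
    deriv_dot3_zero hFuvAt hνvd (horth1 u)
  have eq3 : dot3 (Fuu u v) (ν₂ u v) + dot3 (Fu u v) (νu u v) = 0 :=
    deriv_dot3_zero (a := fun t => Fu t v) (b := fun t => ν₂ t v) (x := u)
      hFuuAt hνud (fun t => horth1 t v)
  have eq4 : dot3 (Fuv u v) (ν₂ u v) + dot3 (Fv u v) (νu u v) = 0 := by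
    rw [hFuv', ← hsym]
    exact deriv_dot3_zero (a := fun t => Fv t v) (b := fun t => ν₂ t v) (x := u)
      hFv_u hνud (fun t => horth2 t v)
  -- the structural relation Fu = vφ - uFv
  have hFuexp : Fu u v = v • φ u v - u • Fv u v := eq_sub_of_add_eq (hnull u v)
  have h2 : dot3 (Fu u v) (νv u v)
      = v * dot3 (φ u v) (νv u v) - u * dot3 (Fv u v) (νv u v) := by
    rw [hFuexp, dot3_smul_sub_left]
  have h3 : dot3 (Fu u v) (νu u v)
      = v * dot3 (φ u v) (νu u v) - u * dot3 (Fv u v) (νu u v) := by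
    rw [hFuexp, dot3_smul_sub_left]
  -- scalar relations
  have hN : N2 u v = Nt u v := by rw [hN2, hNt]; linarith [eq1]
  have hM : M2 u v = v * Mt u v - u * Nt u v := by
    rw [hM2, hMt, hNt]; linarith [eq2, h2]
  have hr : dot3 (Fv u v) (νu u v)
      = v * dot3 (φ u v) (νv u v) - u * dot3 (Fv u v) (νv u v) := by
    linarith [eq4, eq2, h2]
  have hL : L2 u v = v * Lt u v - u * v * Mt u v + u ^ 2 * Nt u v := by
    rw [hL2, hLt, hMt, hNt]
    have hL' : dot3 (Fuu u v) (ν₂ u v)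
        = -(v * dot3 (φ u v) (νu u v)
            - u * (v * dot3 (φ u v) (νv u v) - u * dot3 (Fv u v) (νv u v))) := by
      rw [← hr]; linarith [eq3, h3]
    rw [hL']; ring
  have hGe : Gg u v = Gt u v := by rw [hGg, hGt]
  have hFe : Ff u v = v * Ft u v - u * Gt u v := by
    rw [hFf, hFt, hGt, hFuexp, dot3_smul_sub_left]
  have hEe' : Ee u v = v ^ 2 * Et u v - 2 * u * v * Ft u v + u ^ 2 * Gt u v := by
    rw [hEe, hFuexp, dot3_expand, hEt, hFt, hGt]; ring
  refine ⟨?_, ?_, ?_⟩ <;> simp only [hEe', hFe, hGe, hL, hM, hN] <;> ring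
end

section
/- Let E, F, G, L, M, N and x, y be real numbers with EG − F² ≠ 0, and set K = (LN − M²)/(EG − F²) and H = (EN − 2FM + GL)/(2(EG − F²)). If (L(GL − EN) + 2M(EM − FL))·x² + 2(M(GL + EN) − 2FLN)·xy + (N(EN − GL) + 2M(GM − FN))·y² = 0, then H·(Lx² + 2Mxy + Ny²) = K·(Ex² + 2Fxy + Gy²). In particular, if additionally Ex² + 2Fxy + Gy² ≠ 0 and H ≠ 0, then (Lx² + 2Mxy + Ny²)/(Ex² + 2Fxy + Gy²) = K/H. -/
/-!
The characteristic form is `(EN - 2FM + GL) II - 2(LN - M²) I`, i.e. `2(EG - F²)(H II - K I)`,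
where `I` and `II` are the two fundamental forms evaluated at `(x, y)`. So `H II = K I` wherever
it vanishes, and dividing by `H I` gives `II / I = K / H`.
-/

theorem characteristic_form_eq (E F G L M N x y : ℝ) :
    (L * (G * L - E * N) + 2 * M * (E * M - F * L)) * x ^ 2
        + 2 * (M * (G * L + E * N) - 2 * F * L * N) * x * y
        + (N * (E * N - G * L) + 2 * M * (G * M - F * N)) * y ^ 2
      = (E * N - 2 * F * M + G * L) * (L * x ^ 2 + 2 * M * x * y + N * y ^ 2)
        - 2 * (L * N - M ^ 2) * (E * x ^ 2 + 2 * F * x * y + G * y ^ 2) := by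
  ring

theorem mean_mul_sub_gauss_mul_eq_characteristic_form_div (E F G L M N x y : ℝ) :
    (E * N - 2 * F * M + G * L) / (2 * (E * G - F ^ 2))
          * (L * x ^ 2 + 2 * M * x * y + N * y ^ 2)
        - (L * N - M ^ 2) / (E * G - F ^ 2) * (E * x ^ 2 + 2 * F * x * y + G * y ^ 2)
      = ((L * (G * L - E * N) + 2 * M * (E * M - F * L)) * x ^ 2
          + 2 * (M * (G * L + E * N) - 2 * F * L * N) * x * y
          + (N * (E * N - G * L) + 2 * M * (G * M - F * N)) * y ^ 2)
        / (2 * (E * G - F ^ 2)) := by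
  rw [characteristic_form_eq]
  generalize E * G - F ^ 2 = D
  ring

theorem stmt_15_general (E F G L M N x y K H : ℝ)
    (hK : K = (L * N - M ^ 2) / (E * G - F ^ 2))
    (hH : H = (E * N - 2 * F * M + G * L) / (2 * (E * G - F ^ 2)))
    (hch : (L * (G * L - E * N) + 2 * M * (E * M - F * L)) * x ^ 2
        + 2 * (M * (G * L + E * N) - 2 * F * L * N) * x * y
        + (N * (E * N - G * L) + 2 * M * (G * M - F * N)) * y ^ 2 = 0) :
    H * (L * x ^ 2 + 2 * M * x * y + N * y ^ 2)
        = K * (E * x ^ 2 + 2 * F * x * y + G * y ^ 2)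
    ∧ (E * x ^ 2 + 2 * F * x * y + G * y ^ 2 ≠ 0 → H ≠ 0 →
        (L * x ^ 2 + 2 * M * x * y + N * y ^ 2)
            / (E * x ^ 2 + 2 * F * x * y + G * y ^ 2) = K / H) := by
  have hHK : H * (L * x ^ 2 + 2 * M * x * y + N * y ^ 2)
      = K * (E * x ^ 2 + 2 * F * x * y + G * y ^ 2) := by
    rw [← sub_eq_zero, hH, hK, mean_mul_sub_gauss_mul_eq_characteristic_form_div, hch,
      zero_div]
  refine ⟨hHK, fun hI hH0 => ?_⟩
  rw [div_eq_div_iff hI hH0]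
  linear_combination hHK

/-- Along a solution direction `(x,y)` of the characteristic-curve BDE, the
normal curvature equals `K/H`, the harmonic mean of the principal
curvatures. -/
theorem stmt_15 (E F G L M N x y K H : ℝ) (hEG : E * G - F ^ 2 ≠ 0)
    (hK : K = (L * N - M ^ 2) / (E * G - F ^ 2))
    (hH : H = (E * N - 2 * F * M + G * L) / (2 * (E * G - F ^ 2)))
    (hch : (L * (G * L - E * N) + 2 * M * (E * M - F * L)) * x ^ 2
        + 2 * (M * (G * L + E * N) - 2 * F * L * N) * x * y
        + (N * (E * N - G * L) + 2 * M * (G * M - F * N)) * y ^ 2 = 0) :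
    H * (L * x ^ 2 + 2 * M * x * y + N * y ^ 2)
        = K * (E * x ^ 2 + 2 * F * x * y + G * y ^ 2)
    ∧ (E * x ^ 2 + 2 * F * x * y + G * y ^ 2 ≠ 0 → H ≠ 0 →
        (L * x ^ 2 + 2 * M * x * y + N * y ^ 2)
            / (E * x ^ 2 + 2 * F * x * y + G * y ^ 2) = K / H) :=
  stmt_15_general E F G L M N x y K H hK hH hch
end

section
/- Let E, F, G, L, M, N be real numbers. Then (M(GL + EN) − 2FLN)² − (L(GL − EN) + 2M(EM − FL))·(N(EN − GL) + 2M(GM − FN)) = (LN − M²)·((EN − 2FM + GL)² − 4(EG − F²)(LN − M²)). Moreover, if EG − F² > 0 then the factor (EN − 2FM + GL)² − 4(EG − F²)(LN − M²) is nonnegative, so the discriminant on the left-hand side is a nonnegative multiple of LN − M². -/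
/-- The discriminant of the characteristic-curve BDE factors as
`(LN − M²)·((EN − 2FM + GL)² − 4(EG − F²)(LN − M²))`; when `EG − F² > 0` the
second factor is nonnegative, so the discriminant is a nonnegative multiple of
`LN − M²`. -/
theorem stmt_16 (E F G L M N : ℝ) :
    (M * (G * L + E * N) - 2 * F * L * N) ^ 2
        - (L * (G * L - E * N) + 2 * M * (E * M - F * L))
          * (N * (E * N - G * L) + 2 * M * (G * M - F * N))
      = (L * N - M ^ 2)
          * ((E * N - 2 * F * M + G * L) ^ 2
              - 4 * (E * G - F ^ 2) * (L * N - M ^ 2))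
    ∧ (E * G - F ^ 2 > 0 →
        0 ≤ (E * N - 2 * F * M + G * L) ^ 2
              - 4 * (E * G - F ^ 2) * (L * N - M ^ 2)
        ∧ ∃ c : ℝ, 0 ≤ c ∧
            (M * (G * L + E * N) - 2 * F * L * N) ^ 2
                - (L * (G * L - E * N) + 2 * M * (E * M - F * L))
                  * (N * (E * N - G * L) + 2 * M * (G * M - F * N))
              = c * (L * N - M ^ 2)) := by
  constructor
  · ring
  · intro h
    have hE : E ≠ 0 := by
      intro he
      rw [he] at h
      nlinarith [sq_nonneg F]
    have hE2 : 0 < E ^ 2 := by positivity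
    have key : 0 ≤ (E * N - 2 * F * M + G * L) ^ 2
        - 4 * (E * G - F ^ 2) * (L * N - M ^ 2) := by
      nlinarith [sq_nonneg (E * (E * N - G * L) - 2 * F * (E * M - F * L)),
        mul_nonneg h.le (sq_nonneg (E * M - F * L)), hE2]
    refine ⟨key, (E * N - 2 * F * M + G * L) ^ 2
        - 4 * (E * G - F ^ 2) * (L * N - M ^ 2), key, by ring⟩
end

section
/- Let g,h : ℝ² → ℝ be smooth functions satisfying g(0,0) = h(0,0) = 0, g_u(0,0) = g_vv(0,0), h_u(0,0) = h_vv(0,0), and h_vvv(0,0) = 0, let f : ℝ² → ℝ³ be defined by f(u,v) = (u, (v²/2 − u)·g_vv(u,v) − v·g_v(u,v) + g(u,v), (v²/2 − u)·h_vv(u,v) − v·h_v(u,v) + h(u,v)), and define γ̂ : ℝ → ℝ³ by γ̂(t) = f(t²/2, t). Then γ̂'(0) = (0,0,0), γ̂''(0) = (1,0,0), and γ̂'''(0) = (0, −2·g_vvv(0,0), 0). Consequently |γ̂''(0)| = 1 and |det(γ̂''(0), γ̂'''(0), (0,0,1))| = 2·|g_vvv(0,0)|. -/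
/-- Euclidean norm on `ℝ × ℝ × ℝ`. -/
noncomputable def norm3 (a : ℝ × ℝ × ℝ) : ℝ :=
  Real.sqrt (a.1 * a.1 + a.2.1 * a.2.1 + a.2.2 * a.2.2)

/-- Determinant of three vectors of `ℝ × ℝ × ℝ` (as rows). -/
def det3 (a b c : ℝ × ℝ × ℝ) : ℝ :=
  Matrix.det !![a.1, a.2.1, a.2.2; b.1, b.2.1, b.2.2; c.1, c.2.1, c.2.2]

noncomputable def Pd (F : ℝ × ℝ → ℝ) : ℝ × ℝ → ℝ := fun p => fderiv ℝ F p (0, 1)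
noncomputable def Qd (F : ℝ × ℝ → ℝ) : ℝ × ℝ → ℝ := fun p => fderiv ℝ F p (1, 0)

lemma contDiff_Pd {F : ℝ × ℝ → ℝ} (hF : ContDiff ℝ (⊤ : ℕ∞) F) : ContDiff ℝ (⊤ : ℕ∞) (Pd F) :=
  (ContinuousLinearMap.apply ℝ ℝ ((0 : ℝ), (1 : ℝ))).contDiff.comp (hF.fderiv_right (by simp))

lemma contDiff_Qd {F : ℝ × ℝ → ℝ} (hF : ContDiff ℝ (⊤ : ℕ∞) F) : ContDiff ℝ (⊤ : ℕ∞) (Qd F) :=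
  (ContinuousLinearMap.apply ℝ ℝ ((1 : ℝ), (0 : ℝ))).contDiff.comp (hF.fderiv_right (by simp))

lemma hasDerivAt_comp_curve {F : ℝ × ℝ → ℝ} (hF : ContDiff ℝ (⊤ : ℕ∞) F) {c : ℝ → ℝ × ℝ}
    {c' : ℝ × ℝ} {t : ℝ} (hc : HasDerivAt c c' t) :
    HasDerivAt (fun s => F (c s)) (fderiv ℝ F (c t) c') t :=
  (hF.differentiable (by simp) (c t)).hasFDerivAt.comp_hasDerivAt t hc

lemma deriv_partial_v {F : ℝ × ℝ → ℝ} (hF : ContDiff ℝ (⊤ : ℕ∞) F) (u v : ℝ) :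
    deriv (fun v => F (u, v)) v = Pd F (u, v) := by
  have hc : HasDerivAt (fun v : ℝ => ((u, v) : ℝ × ℝ)) (0, 1) v :=
    (hasDerivAt_const v u).prodMk (hasDerivAt_id v)
  exact (hasDerivAt_comp_curve hF hc).deriv

lemma deriv_partial_u {F : ℝ × ℝ → ℝ} (hF : ContDiff ℝ (⊤ : ℕ∞) F) (u v : ℝ) :
    deriv (fun u => F (u, v)) u = Qd F (u, v) := by
  have hc : HasDerivAt (fun u : ℝ => ((u, v) : ℝ × ℝ)) (1, 0) u :=
    (hasDerivAt_id u).prodMk (hasDerivAt_const u v)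
  exact (hasDerivAt_comp_curve hF hc).deriv

lemma sym_pq {F : ℝ × ℝ → ℝ} (hF : ContDiff ℝ (⊤ : ℕ∞) F) (x : ℝ × ℝ) :
    Pd (Qd F) x = Qd (Pd F) x := by
  have hd : ContDiff ℝ (⊤ : ℕ∞) (fderiv ℝ F) := hF.fderiv_right (by simp)
  have h2 : HasFDerivAt (fderiv ℝ F) (fderiv ℝ (fderiv ℝ F) x) x :=
    (hd.differentiable (by simp) x).hasFDerivAt
  have hq : fderiv ℝ (Qd F) x =
      (ContinuousLinearMap.apply ℝ ℝ ((1 : ℝ), (0 : ℝ))).comp (fderiv ℝ (fderiv ℝ F) x) :=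
    ((ContinuousLinearMap.apply ℝ ℝ ((1 : ℝ), (0 : ℝ))).hasFDerivAt.comp x h2).fderiv
  have hp : fderiv ℝ (Pd F) x =
      (ContinuousLinearMap.apply ℝ ℝ ((0 : ℝ), (1 : ℝ))).comp (fderiv ℝ (fderiv ℝ F) x) :=
    ((ContinuousLinearMap.apply ℝ ℝ ((0 : ℝ), (1 : ℝ))).hasFDerivAt.comp x h2).fderiv
  have hsym := second_derivative_symmetric
    (f := F) (f' := fderiv ℝ F) (f'' := fderiv ℝ (fderiv ℝ F) x) (x := x)
    (fun y => (hF.differentiable (by simp) y).hasFDerivAt) h2 ((0 : ℝ), (1 : ℝ)) ((1 : ℝ), (0 : ℝ))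
  show fderiv ℝ (Qd F) x (0, 1) = fderiv ℝ (Pd F) x (1, 0)
  rw [hq, hp]
  simpa using hsym

lemma hasDerivAt_phi {F : ℝ × ℝ → ℝ} (hF : ContDiff ℝ (⊤ : ℕ∞) F) (t : ℝ) :
    HasDerivAt (fun s => F (s ^ 2 / 2, s))
      (t * Qd F (t ^ 2 / 2, t) + Pd F (t ^ 2 / 2, t)) t := by
  have h1 : HasDerivAt (fun s : ℝ => s ^ 2 / 2) t t := by
    have := (hasDerivAt_pow 2 t).div_const 2
    refine this.congr_deriv ?_
    push_cast; ring
  have hc : HasDerivAt (fun s : ℝ => ((s ^ 2 / 2, s) : ℝ × ℝ)) (t, 1) t :=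
    h1.prodMk (hasDerivAt_id t)
  have h := hasDerivAt_comp_curve hF hc
  refine h.congr_deriv ?_
  have hv : ((t, 1) : ℝ × ℝ) = t • ((1 : ℝ), (0 : ℝ)) + ((0 : ℝ), (1 : ℝ)) := by
    simp [Prod.ext_iff]
  rw [hv, map_add, map_smul, smul_eq_mul]
  rfl

/-- the singular-locus component function `A F t = F(c t) - t ⬝ F_v(c t)`. -/
noncomputable def AA (F : ℝ × ℝ → ℝ) (t : ℝ) : ℝ :=
  F (t ^ 2 / 2, t) - t * Pd F (t ^ 2 / 2, t)

noncomputable def A1 (F : ℝ × ℝ → ℝ) (t : ℝ) : ℝ :=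
  t * Qd F (t ^ 2 / 2, t) - t ^ 2 * Qd (Pd F) (t ^ 2 / 2, t)
    - t * Pd (Pd F) (t ^ 2 / 2, t)

noncomputable def A2 (F : ℝ × ℝ → ℝ) (t : ℝ) : ℝ :=
  Qd F (t ^ 2 / 2, t) + t ^ 2 * Qd (Qd F) (t ^ 2 / 2, t) + t * Pd (Qd F) (t ^ 2 / 2, t)
    - 2 * t * Qd (Pd F) (t ^ 2 / 2, t) - t ^ 3 * Qd (Qd (Pd F)) (t ^ 2 / 2, t)
    - t ^ 2 * Pd (Qd (Pd F)) (t ^ 2 / 2, t) - Pd (Pd F) (t ^ 2 / 2, t)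
    - t ^ 2 * Qd (Pd (Pd F)) (t ^ 2 / 2, t) - t * Pd (Pd (Pd F)) (t ^ 2 / 2, t)

lemma hasDerivAt_AA {F : ℝ × ℝ → ℝ} (hF : ContDiff ℝ (⊤ : ℕ∞) F) (t : ℝ) :
    HasDerivAt (AA F) (A1 F t) t := by
  have h1 := hasDerivAt_phi hF t
  have h2 := (hasDerivAt_id t).mul (hasDerivAt_phi (contDiff_Pd hF) t)
  have h := h1.sub h2
  refine h.congr_deriv ?_
  simp only [A1, id_eq]
  ring

lemma hasDerivAt_A1 {F : ℝ × ℝ → ℝ} (hF : ContDiff ℝ (⊤ : ℕ∞) F) (t : ℝ) :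
    HasDerivAt (A1 F) (A2 F t) t := by
  have ht2 : HasDerivAt (fun s : ℝ => s ^ 2) (2 * t) t := by
    have := hasDerivAt_pow 2 t
    refine this.congr_deriv ?_
    push_cast; ring
  have h1 := (hasDerivAt_id t).mul (hasDerivAt_phi (contDiff_Qd hF) t)
  have h2 := ht2.mul (hasDerivAt_phi (contDiff_Qd (contDiff_Pd hF)) t)
  have h3 := (hasDerivAt_id t).mul (hasDerivAt_phi (contDiff_Pd (contDiff_Pd hF)) t)
  have h := (h1.sub h2).sub h3
  refine h.congr_deriv ?_
  simp only [A2, id_eq]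
  ring

lemma hasDerivAt_A2_zero {F : ℝ × ℝ → ℝ} (hF : ContDiff ℝ (⊤ : ℕ∞) F) :
    HasDerivAt (A2 F)
      (2 * Pd (Qd F) (0, 0) - 2 * Qd (Pd F) (0, 0) - 2 * Pd (Pd (Pd F)) (0, 0)) 0 := by
  have ht : HasDerivAt (fun s : ℝ => s) 1 (0 : ℝ) := hasDerivAt_id 0
  have ht2 : HasDerivAt (fun s : ℝ => s ^ 2) 0 (0 : ℝ) := by
    have := hasDerivAt_pow 2 (0 : ℝ); simpa using this
  have ht3 : HasDerivAt (fun s : ℝ => s ^ 3) 0 (0 : ℝ) := by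
    have := hasDerivAt_pow 3 (0 : ℝ); simpa using this
  have h2t : HasDerivAt (fun s : ℝ => 2 * s) 2 (0 : ℝ) := by
    simpa using ht.const_mul 2
  have T1 := hasDerivAt_phi (contDiff_Qd hF) 0
  have T2 := ht2.mul (hasDerivAt_phi (contDiff_Qd (contDiff_Qd hF)) 0)
  have T3 := ht.mul (hasDerivAt_phi (contDiff_Pd (contDiff_Qd hF)) 0)
  have T4 := h2t.mul (hasDerivAt_phi (contDiff_Qd (contDiff_Pd hF)) 0)
  have T5 := ht3.mul (hasDerivAt_phi (contDiff_Qd (contDiff_Qd (contDiff_Pd hF))) 0)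
  have T6 := ht2.mul (hasDerivAt_phi (contDiff_Pd (contDiff_Qd (contDiff_Pd hF))) 0)
  have T7 := hasDerivAt_phi (contDiff_Pd (contDiff_Pd hF)) 0
  have T8 := ht2.mul (hasDerivAt_phi (contDiff_Qd (contDiff_Pd (contDiff_Pd hF))) 0)
  have T9 := ht.mul (hasDerivAt_phi (contDiff_Pd (contDiff_Pd (contDiff_Pd hF))) 0)
  have h := ((((((((T1.add T2).add T3).sub T4).sub T5).sub T6).sub T7).sub T8).sub T9)
  have hfun : A2 F = fun t =>
      Qd F (t ^ 2 / 2, t) + t ^ 2 * Qd (Qd F) (t ^ 2 / 2, t) + t * Pd (Qd F) (t ^ 2 / 2, t)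
      - 2 * t * Qd (Pd F) (t ^ 2 / 2, t) - t ^ 3 * Qd (Qd (Pd F)) (t ^ 2 / 2, t)
      - t ^ 2 * Pd (Qd (Pd F)) (t ^ 2 / 2, t) - Pd (Pd F) (t ^ 2 / 2, t)
      - t ^ 2 * Qd (Pd (Pd F)) (t ^ 2 / 2, t) - t * Pd (Pd (Pd F)) (t ^ 2 / 2, t) := rfl
  rw [hfun]
  refine h.congr_deriv ?_
  norm_num
  ring

/-- For the normal form of a singular point of the second kind, the singular
locus `γ̂(t) = f(t²/2, t)` satisfies `γ̂'(0) = 0`, `γ̂''(0) = (1,0,0)`,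
`γ̂'''(0) = (0, −2g_vvv(0,0), 0)`; hence `|γ̂''(0)| = 1` and
`|det(γ̂''(0), γ̂'''(0), (0,0,1))| = 2|g_vvv(0,0)|` (the limiting singular
curvature computation `τ_s = 2a₀₃` up to sign). -/
theorem stmt_17 (g h : ℝ → ℝ → ℝ)
    (hg : ContDiff ℝ (⊤ : ℕ∞) (fun p : ℝ × ℝ => g p.1 p.2))
    (hh : ContDiff ℝ (⊤ : ℕ∞) (fun p : ℝ × ℝ => h p.1 p.2))
    (hg0 : g 0 0 = 0) (hh0 : h 0 0 = 0)
    (hgu : deriv (fun t => g t 0) 0 = deriv (deriv (g 0)) 0)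
    (hhu : deriv (fun t => h t 0) 0 = deriv (deriv (h 0)) 0)
    (hhvvv : deriv (deriv (deriv (h 0))) 0 = 0)
    (f : ℝ → ℝ → ℝ × ℝ × ℝ)
    (hf : ∀ u v : ℝ, f u v =
      (u, (v ^ 2 / 2 - u) * deriv (deriv (g u)) v - v * deriv (g u) v + g u v,
          (v ^ 2 / 2 - u) * deriv (deriv (h u)) v - v * deriv (h u) v + h u v))
    (γ : ℝ → ℝ × ℝ × ℝ) (hγ : ∀ t : ℝ, γ t = f (t ^ 2 / 2) t) :
    deriv γ 0 = (0, 0, 0)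
    ∧ deriv (deriv γ) 0 = (1, 0, 0)
    ∧ deriv (deriv (deriv γ)) 0 = (0, -2 * deriv (deriv (deriv (g 0))) 0, 0)
    ∧ norm3 (deriv (deriv γ) 0) = 1
    ∧ |det3 (deriv (deriv γ) 0) (deriv (deriv (deriv γ)) 0) (0, 0, 1)|
        = 2 * |deriv (deriv (deriv (g 0))) 0| := by
  set G : ℝ × ℝ → ℝ := fun p => g p.1 p.2 with hGdef
  set H : ℝ × ℝ → ℝ := fun p => h p.1 p.2 with hHdef
  -- partial derivative translations
  have pv1g : ∀ u v : ℝ, deriv (g u) v = Pd G (u, v) := fun u v => deriv_partial_v hg u v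
  have pv1h : ∀ u v : ℝ, deriv (h u) v = Pd H (u, v) := fun u v => deriv_partial_v hh u v
  have pv2g : ∀ u v : ℝ, deriv (deriv (g u)) v = Pd (Pd G) (u, v) := by
    intro u v
    have : deriv (g u) = fun v => Pd G (u, v) := funext (pv1g u)
    rw [this]
    exact deriv_partial_v (contDiff_Pd hg) u v
  have pv2h : ∀ u v : ℝ, deriv (deriv (h u)) v = Pd (Pd H) (u, v) := by
    intro u v
    have : deriv (h u) = fun v => Pd H (u, v) := funext (pv1h u)
    rw [this]
    exact deriv_partial_v (contDiff_Pd hh) u v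
  have pv3g : deriv (deriv (deriv (g 0))) 0 = Pd (Pd (Pd G)) (0, 0) := by
    have : deriv (deriv (g 0)) = fun v => Pd (Pd G) (0, v) := funext (pv2g 0)
    rw [this]
    exact deriv_partial_v (contDiff_Pd (contDiff_Pd hg)) 0 0
  have pv3h : deriv (deriv (deriv (h 0))) 0 = Pd (Pd (Pd H)) (0, 0) := by
    have : deriv (deriv (h 0)) = fun v => Pd (Pd H) (0, v) := funext (pv2h 0)
    rw [this]
    exact deriv_partial_v (contDiff_Pd (contDiff_Pd hh)) 0 0
  have hug : deriv (fun t => g t 0) 0 = Qd G (0, 0) := deriv_partial_u hg 0 0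
  have huh : deriv (fun t => h t 0) 0 = Qd H (0, 0) := deriv_partial_u hh 0 0
  have hgu' : Qd G (0, 0) = Pd (Pd G) (0, 0) := by
    rw [← hug, ← pv2g 0 0]; exact hgu
  have hhu' : Qd H (0, 0) = Pd (Pd H) (0, 0) := by
    rw [← huh, ← pv2h 0 0]; exact hhu
  have hhvvv' : Pd (Pd (Pd H)) (0, 0) = 0 := by rw [← pv3h]; exact hhvvv
  -- the curve in normal form
  have hγfun : γ = fun t => ((t ^ 2 / 2 : ℝ), AA G t, AA H t) := by
    funext t
    rw [hγ, hf, pv1g, pv1h, pv2g, pv2h]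
    refine Prod.ext rfl (Prod.ext ?_ ?_)
    · show (t ^ 2 / 2 - t ^ 2 / 2) * Pd (Pd G) (t ^ 2 / 2, t)
        - t * Pd G (t ^ 2 / 2, t) + G (t ^ 2 / 2, t) = AA G t
      unfold AA; ring
    · show (t ^ 2 / 2 - t ^ 2 / 2) * Pd (Pd H) (t ^ 2 / 2, t)
        - t * Pd H (t ^ 2 / 2, t) + H (t ^ 2 / 2, t) = AA H t
      unfold AA; ring
  have hsq : ∀ t : ℝ, HasDerivAt (fun s : ℝ => s ^ 2 / 2) t t := by
    intro t
    have := (hasDerivAt_pow 2 t).div_const 2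
    refine this.congr_deriv ?_
    push_cast; ring
  have hd1 : deriv γ = fun t => ((t : ℝ), A1 G t, A1 H t) := by
    funext t
    rw [hγfun]
    exact ((hsq t).prodMk ((hasDerivAt_AA hg t).prodMk (hasDerivAt_AA hh t))).deriv
  have hd2 : deriv (deriv γ) = fun t => ((1 : ℝ), A2 G t, A2 H t) := by
    funext t
    rw [hd1]
    exact ((hasDerivAt_id t).prodMk ((hasDerivAt_A1 hg t).prodMk (hasDerivAt_A1 hh t))).deriv
  have hd3 : deriv (deriv (deriv γ)) 0 =
      ((0 : ℝ),
        2 * Pd (Qd G) (0, 0) - 2 * Qd (Pd G) (0, 0) - 2 * Pd (Pd (Pd G)) (0, 0),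
        2 * Pd (Qd H) (0, 0) - 2 * Qd (Pd H) (0, 0) - 2 * Pd (Pd (Pd H)) (0, 0)) := by
    rw [hd2]
    exact ((hasDerivAt_const 0 (1 : ℝ)).prodMk
      ((hasDerivAt_A2_zero hg).prodMk (hasDerivAt_A2_zero hh))).deriv
  have hA2g0 : A2 G 0 = 0 := by
    have : A2 G 0 = Qd G (0, 0) - Pd (Pd G) (0, 0) := by
      simp [A2]
    rw [this, hgu']; ring
  have hA2h0 : A2 H 0 = 0 := by
    have : A2 H 0 = Qd H (0, 0) - Pd (Pd H) (0, 0) := by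
      simp [A2]
    rw [this, hhu']; ring
  have c1 : deriv γ 0 = (0, 0, 0) := by
    rw [hd1]; simp [A1]
  have c2 : deriv (deriv γ) 0 = (1, 0, 0) := by
    rw [hd2]; simp [hA2g0, hA2h0]
  have c3 : deriv (deriv (deriv γ)) 0 = (0, -2 * deriv (deriv (deriv (g 0))) 0, 0) := by
    rw [hd3, pv3g]
    refine Prod.ext rfl (Prod.ext ?_ ?_)
    · show 2 * Pd (Qd G) (0, 0) - 2 * Qd (Pd G) (0, 0) - 2 * Pd (Pd (Pd G)) (0, 0)
        = -2 * Pd (Pd (Pd G)) (0, 0)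
      rw [sym_pq hg]; ring
    · show 2 * Pd (Qd H) (0, 0) - 2 * Qd (Pd H) (0, 0) - 2 * Pd (Pd (Pd H)) (0, 0) = 0
      rw [sym_pq hh, hhvvv']; ring
  refine ⟨c1, c2, c3, ?_, ?_⟩
  · rw [c2]; simp [norm3]
  · rw [c2, c3]
    simp [det3, Matrix.det_fin_three, abs_mul]
end
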